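/- arXiv:1404.4064 — 7 statements merged into one kernel-verified Lean document; each statement's English description precedes it below -/
import Mathlib

section
/- For every integer n ≥ 2, the combinatorial Grassmannian G(n+1,2) — whose points are the 2-element subsets of an (n+1)-element set X and whose lines are the triples of 2-subsets contained in a common 3-subset of X — is a configuration with binomial(n+1,2) points, binomial(n+1,3) lines, 3 points per line, and n-1 lines through each point, and it freely contains a complete graph K_n. -/
open Finset

/-- A partial Steiner triple system: a finite incidence structure given by its
set of lines (3-element subsets of the point set) such that two distinct
points lie on at most one common line. -/
structure PSTS (S : Type) where
  lines : Finset (Finset S)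
  card3 : ∀ L ∈ lines, L.card = 3
  unique : ∀ L₁ ∈ lines, ∀ L₂ ∈ lines, ∀ a b : S, a ≠ b →
    a ∈ L₁ → b ∈ L₁ → a ∈ L₂ → b ∈ L₂ → L₁ = L₂

/-- The rank of a point: the number of lines through it. -/
def pointRank {S : Type} [DecidableEq S] (M : PSTS S) (p : S) : ℕ :=
  (M.lines.filter (fun L => p ∈ L)).card

/-- A binomial B(m)-configuration: C(m,2) points, each of rank m-2, and C(m,3) lines. -/
def IsBinomial {S : Type} [Fintype S] [DecidableEq S] (M : PSTS S) (m : ℕ) : Prop :=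
  Fintype.card S = Nat.choose m 2 ∧ M.lines.card = Nat.choose m 3 ∧
    ∀ p : S, pointRank M p = m - 2

/-- `L` is a side of the complete graph on `X`: a line of `M` meeting `X` in
exactly two points (the extension of an edge of `K_X`). -/
def IsSide {S : Type} [DecidableEq S] (M : PSTS S) (X L : Finset S) : Prop :=
  L ∈ M.lines ∧ (L ∩ X).card = 2

instance {S : Type} [DecidableEq S] (M : PSTS S) (X L : Finset S) :
    Decidable (IsSide M X L) := by
  unfold IsSide; infer_instance

/-- The complete graph on the vertex set `X` is freely contained in `M`:
every edge of `K_X` extends to a (necessarily unique) line of `M` which meets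
`X` in exactly two points (hence distinct edges extend to distinct lines), and
two distinct sides never meet outside `X`. -/
def FreelyContains {S : Type} [DecidableEq S] (M : PSTS S) (X : Finset S) : Prop :=
  (∀ a ∈ X, ∀ b ∈ X, a ≠ b → ∃ L ∈ M.lines, a ∈ L ∧ b ∈ L ∧ (L ∩ X).card = 2) ∧
  (∀ L₁ L₂ : Finset S, IsSide M X L₁ → IsSide M X L₂ → L₁ ≠ L₂ →
    ∀ p, p ∈ L₁ → p ∈ L₂ → p ∈ X)

/-- `(Z,G)` is a B(m)-configuration regularly contained in `M` (a subspace):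
the lines of `G` are lines of `M` lying in `Z`, every line of `M` meeting `Z`
in at least two points belongs to `G`, and `(Z,G)` has the binomial B(m) parameters. -/
def RegularBinomialSub {S : Type} [DecidableEq S] (M : PSTS S)
    (Z : Finset S) (G : Finset (Finset S)) (m : ℕ) : Prop :=
  G ⊆ M.lines ∧ (∀ L ∈ G, L ⊆ Z) ∧
  (∀ L ∈ M.lines, 2 ≤ (L ∩ Z).card → L ∈ G) ∧
  Z.card = Nat.choose m 2 ∧ G.card = Nat.choose m 3 ∧
  ∀ p ∈ Z, (G.filter (fun L => p ∈ L)).card = m - 2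

/-- The lines of the combinatorial Grassmannian G(Y,2): triples of 2-subsets
of `Y` contained in a common 3-subset. -/
def GrasLines (Y : Type) [Fintype Y] [DecidableEq Y] :
    Finset (Finset {e : Finset Y // e.card = 2}) :=
  (Finset.univ.filter (fun f : Finset Y => f.card = 3)).image
    (fun f => Finset.univ.filter (fun e : {e : Finset Y // e.card = 2} => e.val ⊆ f))

/-- `M` freely contains exactly `m` complete `K_j`-graphs. -/
def ExactlyKGraphs {S : Type} [DecidableEq S] (M : PSTS S) (j m : ℕ) : Prop :=
  ∃ f : Fin m → Finset S, Function.Injective f ∧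
    (∀ i, (f i).card = j ∧ FreelyContains M (f i)) ∧
    (∀ X : Finset S, X.card = j → FreelyContains M X → ∃ i, X = f i)

/-! Two distinct 2-subsets of a 3-set have that 3-set as their union, so the lines of the
Grassmannian are determined by any two of their points. For a fixed `y`, the pairs through `y`
form the complete graph: a line (the pairs inside a 3-set `f`) meets this star in two points
exactly when `y ∈ f`, and a point of such a side outside the star is the pair `f \ {y}`, which
determines `f`, so distinct sides meet only inside the star. -/

section FinsetPairs

variable {α : Type} [DecidableEq α]

lemma card_inter_lt_of_card_eq {k : ℕ} {a b : Finset α} (ha : a.card = k) (hb : b.card = k)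
    (hne : a ≠ b) : (a ∩ b).card < k := by
  by_contra! h
  have hia : a ∩ b = a := eq_of_subset_of_card_le inter_subset_left (by omega)
  have hib : a ∩ b = b := eq_of_subset_of_card_le inter_subset_right (by omega)
  exact hne (hia.symm.trans hib)

lemma union_eq_of_card_eq_two_of_card_eq_three {a b f : Finset α} (ha : a.card = 2)
    (hb : b.card = 2) (hne : a ≠ b) (haf : a ⊆ f) (hbf : b ⊆ f) (hf : f.card = 3) :
    a ∪ b = f := by
  have := card_union_add_card_inter a b
  have := card_inter_lt_of_card_eq ha hb hne
  exact eq_of_subset_of_card_le (union_subset haf hbf) (by omega)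

lemma card_union_eq_three_of_mem_inter {a b : Finset α} {y : α} (ha : a.card = 2)
    (hb : b.card = 2) (hne : a ≠ b) (hya : y ∈ a) (hyb : y ∈ b) : (a ∪ b).card = 3 := by
  have := card_union_add_card_inter a b
  have := card_inter_lt_of_card_eq ha hb hne
  have : 0 < (a ∩ b).card := card_pos.mpr ⟨y, mem_inter.mpr ⟨hya, hyb⟩⟩
  omega

lemma eq_insert_of_card_eq_succ {p f : Finset α} {y : α} (hf : f.card = p.card + 1)
    (hpf : p ⊆ f) (hyf : y ∈ f) (hyp : y ∉ p) : f = insert y p :=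
  (eq_of_subset_of_card_le (insert_subset hyf hpf) (by rw [card_insert_of_notMem hyp, hf])).symm

lemma image_insert_compl [Fintype α] (p : Finset α) :
    pᶜ.image (insert · p) = univ.filter (fun f => f.card = p.card + 1 ∧ p ⊆ f) := by
  ext f
  simp only [mem_image, mem_compl, mem_filter, mem_univ, true_and]
  constructor
  · rintro ⟨y, hyp, rfl⟩
    exact ⟨card_insert_of_notMem hyp, subset_insert y p⟩
  · rintro ⟨hf, hpf⟩
    obtain ⟨y, hy⟩ : (f \ p).Nonempty := by
      rw [← card_pos, card_sdiff_of_subset hpf]; omega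
    obtain ⟨hyf, hyp⟩ := mem_sdiff.mp hy
    exact ⟨y, hyp, (eq_insert_of_card_eq_succ hf hpf hyf hyp).symm⟩

lemma exists_eq_pair_of_mem {e : Finset α} {y : α} (he : e.card = 2) (hy : y ∈ e) :
    ∃ x, x ≠ y ∧ e = {y, x} := by
  obtain ⟨a, b, hab, rfl⟩ := card_eq_two.mp he
  rcases mem_insert.mp hy with rfl | hy
  · exact ⟨b, hab.symm, rfl⟩
  · rw [mem_singleton.mp hy]
    exact ⟨a, hab, pair_comm a b⟩

end FinsetPairs

section Grassmannian

variable {Y : Type} [Fintype Y] [DecidableEq Y]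

def grasLine (f : Finset Y) : Finset {e : Finset Y // e.card = 2} :=
  univ.filter (fun e => e.val ⊆ f)

@[simp]
lemma mem_grasLine {f : Finset Y} {e : {e : Finset Y // e.card = 2}} :
    e ∈ grasLine f ↔ e.val ⊆ f := by
  simp [grasLine]

lemma card_grasLine (f : Finset Y) : (grasLine f).card = f.card.choose 2 := by
  have : (grasLine f).map (Function.Embedding.subtype _) = f.powersetCard 2 := by
    ext e
    simp [and_comm]
  rw [← card_powersetCard, ← this, card_map]

lemma union_eq_of_mem_grasLine {f : Finset Y} (hf : f.card = 3)
    {a b : {e : Finset Y // e.card = 2}} (hab : a ≠ b) (ha : a ∈ grasLine f)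
    (hb : b ∈ grasLine f) : a.val ∪ b.val = f :=
  union_eq_of_card_eq_two_of_card_eq_three a.prop b.prop (fun h => hab (Subtype.ext h))
    (mem_grasLine.mp ha) (mem_grasLine.mp hb) hf

lemma grasLine_injOn : Set.InjOn (grasLine (Y := Y)) {f | f.card = 3} := by
  intro f (hf : f.card = 3) g (hg : g.card = 3) hfg
  obtain ⟨a, ha, b, hb, hab⟩ := one_lt_card.mp (show 1 < (grasLine f).card by
    rw [card_grasLine, hf]; decide)
  rw [← union_eq_of_mem_grasLine hf hab ha hb,
    union_eq_of_mem_grasLine hg hab (hfg ▸ ha) (hfg ▸ hb)]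

lemma grasLines_eq : GrasLines Y = (univ.filter (·.card = 3)).image grasLine := rfl

lemma mem_grasLines {L : Finset {e : Finset Y // e.card = 2}} :
    L ∈ GrasLines Y ↔ ∃ f : Finset Y, f.card = 3 ∧ grasLine f = L := by
  simp [GrasLines, grasLine]


variable (Y) in
def grassmannian : PSTS {e : Finset Y // e.card = 2} where
  lines := GrasLines Y
  card3 L hL := by
    obtain ⟨f, hf, rfl⟩ := mem_grasLines.mp hL
    rw [card_grasLine, hf]
    rfl
  unique L₁ h₁ L₂ h₂ a b hab ha₁ hb₁ ha₂ hb₂ := by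
    obtain ⟨f₁, hf₁, rfl⟩ := mem_grasLines.mp h₁
    obtain ⟨f₂, hf₂, rfl⟩ := mem_grasLines.mp h₂
    rw [← union_eq_of_mem_grasLine hf₁ hab ha₁ hb₁, union_eq_of_mem_grasLine hf₂ hab ha₂ hb₂]

lemma card_grasLines : (GrasLines Y).card = (Fintype.card Y).choose 3 := by
  rw [grasLines_eq, card_image_of_injOn fun f hf g hg => grasLine_injOn (by simpa using hf)
    (by simpa using hg), ← card_univ, ← card_powersetCard]
  congr 1
  ext f
  simp

lemma pointRank_grassmannian (p : {e : Finset Y // e.card = 2}) :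
    pointRank (grassmannian Y) p = Fintype.card Y - 2 := by
  have hlines : (GrasLines Y).filter (p ∈ ·) =
      (univ.filter fun f => f.card = 3 ∧ p.val ⊆ f).image grasLine := by
    rw [grasLines_eq, filter_image, filter_filter]
    simp only [mem_grasLine]
  rw [pointRank, grassmannian, hlines, card_image_of_injOn fun f hf g hg =>
      grasLine_injOn (mem_filter.mp hf).2.1 (mem_filter.mp hg).2.1,
    show 3 = p.val.card + 1 by rw [p.prop], ← image_insert_compl, card_image_of_injOn (insert_inj_on' _), card_compl, p.prop]

lemma isBinomial_grassmannian : IsBinomial (grassmannian Y) (Fintype.card Y) :=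
  ⟨Fintype.card_finset_len 2, card_grasLines, pointRank_grassmannian⟩

def grasStar (y : Y) : Finset {e : Finset Y // e.card = 2} :=
  univ.filter (fun e => y ∈ e.val)

@[simp]
lemma mem_grasStar {y : Y} {e : {e : Finset Y // e.card = 2}} : e ∈ grasStar y ↔ y ∈ e.val := by
  simp [grasStar]

lemma card_grasLine_inter_grasStar {f : Finset Y} {y : Y} (hy : y ∈ f) :
    (grasLine f ∩ grasStar y).card = f.card - 1 := by
  rw [← card_erase_of_mem hy]
  refine (card_bij (fun x hx => ⟨{y, x}, card_pair (ne_of_mem_erase hx).symm⟩) ?_ ?_ ?_).symm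
  · intro x hx
    simpa [insert_subset_iff, hy] using mem_of_mem_erase hx
  · intro x hx x' hx' h
    have hpair : ({y, x} : Finset Y) = {y, x'} := congrArg Subtype.val h
    have hx_mem : x ∈ ({y, x'} : Finset Y) := hpair ▸ mem_insert_of_mem (mem_singleton_self x)
    rcases mem_insert.mp hx_mem with hxy | hxx'
    · exact absurd hxy (ne_of_mem_erase hx)
    · exact mem_singleton.mp hxx'
  · intro e he
    obtain ⟨hef, hye⟩ := mem_inter.mp he
    obtain ⟨x, hxy, hex⟩ := exists_eq_pair_of_mem e.prop (mem_grasStar.mp hye)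
    refine ⟨x, mem_erase.mpr ⟨hxy, mem_grasLine.mp hef (hex ▸ mem_insert_of_mem
      (mem_singleton_self x))⟩, Subtype.ext hex.symm⟩

lemma card_grasStar (y : Y) : (grasStar y).card = Fintype.card Y - 1 := by
  have hline : grasLine (univ : Finset Y) = univ := by
    simp [grasLine]
  rw [← card_univ, ← card_grasLine_inter_grasStar (mem_univ y), hline, univ_inter]

lemma isSide_grasStar_iff {y : Y} {L : Finset {e : Finset Y // e.card = 2}} :
    IsSide (grassmannian Y) (grasStar y) L ↔ ∃ f : Finset Y, f.card = 3 ∧ y ∈ f ∧ grasLine f = L := by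
  constructor
  · rintro ⟨hL, hcard⟩
    obtain ⟨f, hf, rfl⟩ := mem_grasLines.mp hL
    obtain ⟨e, he⟩ : (grasLine f ∩ grasStar y).Nonempty := by
      rw [← card_pos, hcard]; decide
    obtain ⟨hef, hye⟩ := mem_inter.mp he
    exact ⟨f, hf, mem_grasLine.mp hef (mem_grasStar.mp hye), rfl⟩
  · rintro ⟨f, hf, hy, rfl⟩
    exact ⟨mem_grasLines.mpr ⟨f, hf, rfl⟩, by rw [card_grasLine_inter_grasStar hy, hf]⟩

lemma freelyContains_grasStar (y : Y) : FreelyContains (grassmannian Y) (grasStar y) := by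
  constructor
  · intro a ha b hb hab
    have hf := card_union_eq_three_of_mem_inter a.prop b.prop (fun h => hab (Subtype.ext h))
      (mem_grasStar.mp ha) (mem_grasStar.mp hb)
    obtain ⟨hL, hcard⟩ := isSide_grasStar_iff.mpr
      ⟨a.val ∪ b.val, hf, mem_union_left _ (mem_grasStar.mp ha), rfl⟩
    exact ⟨_, hL, mem_grasLine.mpr subset_union_left, mem_grasLine.mpr subset_union_right, hcard⟩
  · intro L₁ L₂ h₁ h₂ hne p hp₁ hp₂
    obtain ⟨f₁, hf₁, hy₁, rfl⟩ := isSide_grasStar_iff.mp h₁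
    obtain ⟨f₂, hf₂, hy₂, rfl⟩ := isSide_grasStar_iff.mp h₂
    by_contra hp
    have hyp : y ∉ p.val := fun h => hp (mem_grasStar.mpr h)
    have hcard : ∀ {f : Finset Y}, f.card = 3 → f.card = p.val.card + 1 := by
      intro f hf; rw [hf, p.prop]
    apply hne
    rw [eq_insert_of_card_eq_succ (hcard hf₁) (mem_grasLine.mp hp₁) hy₁ hyp,
      eq_insert_of_card_eq_succ (hcard hf₂) (mem_grasLine.mp hp₂) hy₂ hyp]

end Grassmannian

theorem stmt_0_general (n : ℕ) (Y : Type) [Fintype Y] [DecidableEq Y]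
    (hY : Fintype.card Y = n + 1) :
    ∃ M : PSTS {e : Finset Y // e.card = 2},
      M.lines = GrasLines Y ∧ IsBinomial M (n + 1) ∧
      ∃ X : Finset {e : Finset Y // e.card = 2}, X.card = n ∧ FreelyContains M X := by
  obtain ⟨y⟩ : Nonempty Y := Fintype.card_pos_iff.mp (by omega)
  refine ⟨grassmannian Y, rfl, hY ▸ isBinomial_grassmannian, grasStar y, ?_,
    freelyContains_grasStar y⟩
  rw [card_grasStar, hY, Nat.add_sub_cancel]

/-- For n ≥ 2, the combinatorial Grassmannian G(n+1,2) is a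
B(n+1)-configuration (C(n+1,2) points, C(n+1,3) lines, 3 points per line,
n-1 lines through each point) which freely contains a complete graph K_n. -/
theorem stmt_0 (n : ℕ) (hn : 2 ≤ n) (Y : Type) [Fintype Y] [DecidableEq Y]
    (hY : Fintype.card Y = n + 1) :
    ∃ M : PSTS {e : Finset Y // e.card = 2},
      M.lines = GrasLines Y ∧ IsBinomial M (n + 1) ∧
      ∃ X : Finset {e : Finset Y // e.card = 2}, X.card = n ∧ FreelyContains M X :=
  stmt_0_general n Y hY
end

section
/- Let M = (S,L) be a binomial B(n+1)-configuration (binomial(n+1,2) points of rank n-1, binomial(n+1,3) lines of size 3) that freely contains a complete graph K_X with |X| = n. Then the complement of K_X, i.e. the structure with points S∖X and lines L minus the sides of K_X, is a B(n)-configuration (binomial(n,2) points of rank n-2, binomial(n,3) lines) and is a subspace of M (every line of M meeting S∖X in at least two points lies entirely in S∖X). -/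
open Finset

/-! The `n` points of `X` have rank `n - 1`, and the `C(n,2)` sides already contribute `n - 1`
lines through each of them, so every line through a point of `X` is a side. Each side has
exactly one point outside `X`, two sides never meet outside `X`, and there are as many sides
as points outside `X`; hence every point outside `X` lies on exactly one side. Deleting the
sides therefore lowers every rank outside `X` by one and the number of lines by `C(n,2)`,
and a line meeting `S ∖ X` twice cannot be a side. -/

theorem Finset.sum_card_filter_mem_eq_sum_card_inter {α : Type*} [DecidableEq α]
    (s : Finset α) (B : Finset (Finset α)) :
    ∑ a ∈ s, #{b ∈ B | a ∈ b} = ∑ t ∈ B, #(s ∩ t) := by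
  simp_rw [← filter_mem_eq_inter, card_eq_sum_ones, sum_filter]
  exact sum_comm

namespace PSTS

variable {S : Type} [DecidableEq S] (M : PSTS S) {X : Finset S}

def sides (X : Finset S) : Finset (Finset S) := M.lines.filter (IsSide M X)

theorem eq_of_two_le_card_inter {L₁ L₂ : Finset S} (h₁ : L₁ ∈ M.lines) (h₂ : L₂ ∈ M.lines)
    (h : 2 ≤ #(L₁ ∩ L₂)) : L₁ = L₂ := by
  obtain ⟨a, ha, b, hb, hab⟩ := one_lt_card.1 h
  rw [mem_inter] at ha hb
  exact M.unique L₁ h₁ L₂ h₂ a b hab ha.1 hb.1 ha.2 hb.2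

theorem card_sides (h : FreelyContains M X) : #(M.sides X) = (#X).choose 2 := by
  rw [← card_powersetCard]
  refine card_bij (fun L _ => L ∩ X) ?_ ?_ ?_
  · intro L hL
    exact mem_powersetCard.2 ⟨inter_subset_right, (mem_filter.1 hL).2.2⟩
  · intro L₁ h₁ L₂ h₂ hL
    refine M.eq_of_two_le_card_inter (mem_filter.1 h₁).1 (mem_filter.1 h₂).1 ?_
    calc 2 = #(L₁ ∩ X) := (mem_filter.1 h₁).2.2.symm
      _ ≤ #(L₁ ∩ L₂) := card_le_card (subset_inter inter_subset_left (hL ▸ inter_subset_left))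
  · intro e he
    obtain ⟨heX, he2⟩ := mem_powersetCard.1 he
    obtain ⟨a, b, hab, rfl⟩ := card_eq_two.1 he2
    have ha : a ∈ X := heX (by simp)
    have hb : b ∈ X := heX (by simp)
    obtain ⟨L, hL, haL, hbL, hLX⟩ := h.1 a ha b hb hab
    have hsub : {a, b} ⊆ L ∩ X :=
      insert_subset (mem_inter.2 ⟨haL, ha⟩) (singleton_subset_iff.2 (mem_inter.2 ⟨hbL, hb⟩))
    exact ⟨L, mem_filter.2 ⟨hL, hL, hLX⟩, (eq_of_subset_of_card_le hsub (by rw [hLX, he2])).symm⟩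

theorem card_sdiff_of_isSide {L : Finset S} (hL : IsSide M X L) : #(L \ X) = 1 := by
  have := card_sdiff_add_card_inter L X
  rw [M.card3 L hL.1, hL.2] at this
  omega

theorem pointRank_eq_card_sides_add (p : S) :
    pointRank M p = #{L ∈ M.sides X | p ∈ L} +
      #{L ∈ M.lines.filter (fun L => ¬ IsSide M X L) | p ∈ L} := by
  rw [pointRank, ← card_filter_add_card_filter_not (IsSide M X)]
  simp only [sides, filter_filter, and_comm]

theorem disjoint_of_not_isSide (h : FreelyContains M X)
    (hrank : ∀ x ∈ X, pointRank M x = #X - 1) {L : Finset S} (hL : L ∈ M.lines)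
    (hL' : ¬ IsSide M X L) : Disjoint X L := by
  have hcount : ∑ x ∈ X, pointRank M x = ∑ L ∈ M.sides X, #(X ∩ L) +
      ∑ L ∈ M.lines.filter (fun L => ¬ IsSide M X L), #(X ∩ L) := by
    rw [sides, sum_filter_add_sum_filter_not]
    exact sum_card_filter_mem_eq_sum_card_inter X M.lines
  have hsides : ∑ L ∈ M.sides X, #(X ∩ L) = #X * (#X - 1) := by
    rw [sum_congr rfl fun L hL => inter_comm X L ▸ (mem_filter.1 hL).2.2, sum_const, smul_eq_mul,
      M.card_sides h, Nat.choose_two_right, Nat.div_mul_cancel (Nat.even_mul_pred_self _).two_dvd]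
  rw [sum_congr rfl hrank, sum_const, smul_eq_mul, hsides] at hcount
  have hzero : ∑ L ∈ M.lines.filter (fun L => ¬ IsSide M X L), #(X ∩ L) = 0 := by omega
  exact disjoint_iff_inter_eq_empty.2
    (card_eq_zero.1 (sum_eq_zero_iff.1 hzero L (mem_filter.2 ⟨hL, hL'⟩)))

theorem card_sides_mem_eq_one [Fintype S] (h : FreelyContains M X)
    (hcard : #Xᶜ = (#X).choose 2) {p : S} (hp : p ∉ X) : #{L ∈ M.sides X | p ∈ L} = 1 := by
  have hle : ∀ q ∈ Xᶜ, #{L ∈ M.sides X | q ∈ L} ≤ 1 := by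
    intro q hq
    refine card_le_one.2 fun L₁ h₁ L₂ h₂ => by_contra fun hne => mem_compl.1 hq ?_
    rw [mem_filter, sides, mem_filter] at h₁ h₂
    exact h.2 L₁ L₂ h₁.1.2 h₂.1.2 hne q h₁.2 h₂.2
  have hsum : ∑ q ∈ Xᶜ, #{L ∈ M.sides X | q ∈ L} = ∑ _q ∈ Xᶜ, 1 := by
    rw [sum_card_filter_mem_eq_sum_card_inter, sum_const, smul_eq_mul, mul_one, hcard,
      ← M.card_sides h, card_eq_sum_ones]
    refine sum_congr rfl fun L hL => ?_
    rw [inter_comm, ← sdiff_eq_inter_compl]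
    exact M.card_sdiff_of_isSide (mem_filter.1 hL).2
  exact (sum_eq_sum_iff_of_le hle).1 hsum p (mem_compl.2 hp)

end PSTS

/-- In a binomial B(n+1)-configuration freely containing K_X with
|X| = n, the complement of K_X (points S∖X, lines of M that are not sides of
K_X) is a B(n)-configuration and a subspace of M. -/
theorem stmt_2 (n : ℕ) (S : Type) [Fintype S] [DecidableEq S] (M : PSTS S)
    (hM : IsBinomial M (n + 1)) (X : Finset S) (hX : X.card = n)
    (hfree : FreelyContains M X)
    (Z : Finset S) (hZ : Z = Finset.univ \ X)
    (G : Finset (Finset S)) (hG : G = M.lines.filter (fun L => ¬ IsSide M X L)) :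
    Z.card = Nat.choose n 2 ∧ G.card = Nat.choose n 3 ∧
    (∀ L ∈ G, L ⊆ Z) ∧
    (∀ p ∈ Z, (G.filter (fun L => p ∈ L)).card = n - 2) ∧
    (∀ L ∈ M.lines, 2 ≤ (L ∩ Z).card → L ⊆ Z ∧ L ∈ G) := by
  obtain ⟨hcard, hlines, hrank⟩ := hM
  subst hZ hG hX
  rw [← compl_eq_univ_sdiff]
  have hrankX : ∀ x, pointRank M x = #X - 1 := fun x => by rw [hrank x]; omega
  have hZcard : #Xᶜ = (#X).choose 2 := by
    simp only [card_compl, hcard, Nat.choose_succ_succ', Nat.choose_one_right, Nat.reduceAdd]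
    omega
  have hGZ : ∀ L ∈ M.lines.filter (fun L => ¬ IsSide M X L), L ⊆ Xᶜ := fun L hL =>
    subset_compl_iff_disjoint_left.2
      (M.disjoint_of_not_isSide hfree (fun x _ => hrankX x) (mem_filter.1 hL).1 (mem_filter.1 hL).2)
  refine ⟨hZcard, ?_, hGZ, ?_, ?_⟩
  · have := card_filter_add_card_filter_not (s := M.lines) (IsSide M X)
    rw [← PSTS.sides, M.card_sides hfree, hlines] at this
    simp only [Nat.choose_succ_succ', Nat.reduceAdd] at this
    omega
  · intro p hp
    have := M.pointRank_eq_card_sides_add (X := X) p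
    rw [hrankX, M.card_sides_mem_eq_one hfree hZcard (mem_compl.1 hp)] at this
    omega
  · intro L hL h2
    have hL' : ¬ IsSide M X L := fun hs => by
      rw [← sdiff_eq_inter_compl, M.card_sdiff_of_isSide hs] at h2
      omega
    exact ⟨hGZ L (mem_filter.2 ⟨hL, hL'⟩), mem_filter.2 ⟨hL, hL'⟩⟩
end

section
/- Any two distinct complete K_n-graphs freely contained in a binomial B(n+1)-configuration share exactly one vertex. -/
open Finset

/-! Let `X` span a freely contained `K_n` in a `B(n+1)`-configuration. A vertex `a ∈ X` has rank
`n - 1` and already lies on the `n - 1` sides joining it to the other vertices, so every line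
through a vertex of `X` is a side. The `C(n,2)` sides have pairwise distinct third points, and
exactly `C(n+1,2) - n = C(n,2)` points lie off `X`, so every point off `X` is on a side.

If `X₁, X₂` were disjoint, a vertex `x ∈ X₂` would lie on a side `L` of `X₁`, which is then also a
side of `X₂`: the line `L` would contain two points of each. If they shared two vertices `a, b`,
then for `x ∈ X₂ \ X₁` the sides `xa, xb` of `X₂` would be two sides of `X₁` meeting at `x ∉ X₁`. -/

section

variable {S : Type} [DecidableEq S] {M : PSTS S} {X L : Finset S}

def PSTS.sides_s5 (M : PSTS S) (X : Finset S) : Finset (Finset S) :=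
  M.lines.filter (IsSide M X)

lemma PSTS.mem_sides : L ∈ M.sides_s5 X ↔ IsSide M X L := by
  simp only [PSTS.sides_s5, mem_filter, and_iff_right_iff_imp]
  exact fun h => h.1

lemma IsSide.inter_eq (hL : IsSide M X L) {a b : S} (ha : a ∈ L ∩ X) (hb : b ∈ L ∩ X)
    (hab : a ≠ b) : L ∩ X = {a, b} :=
  (eq_of_subset_of_card_le (by grind) (by rw [hL.2, card_pair hab])).symm

lemma IsSide.card_sdiff (hL : IsSide M X L) : (L \ X).card = 1 := by
  have := card_inter_add_card_sdiff L X
  have := M.card3 L hL.1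
  have := hL.2
  omega

lemma IsSide.eq_of_inter_eq {L₁ L₂ : Finset S} (h₁ : IsSide M X L₁) (h₂ : IsSide M X L₂)
    (heq : L₁ ∩ X = L₂ ∩ X) : L₁ = L₂ := by
  obtain ⟨a, b, hab, hL₁X⟩ := card_eq_two.1 h₁.2
  have ha₁ : a ∈ L₁ ∩ X := by simp [hL₁X]
  have hb₁ : b ∈ L₁ ∩ X := by simp [hL₁X]
  have ha₂ : a ∈ L₂ ∩ X := heq ▸ ha₁
  have hb₂ : b ∈ L₂ ∩ X := heq ▸ hb₁
  exact M.unique L₁ h₁.1 L₂ h₂.1 a b hab (mem_inter.1 ha₁).1 (mem_inter.1 hb₁).1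
    (mem_inter.1 ha₂).1 (mem_inter.1 hb₂).1

lemma FreelyContains.exists_isSide (hf : FreelyContains M X) {a b : S} (ha : a ∈ X)
    (hb : b ∈ X) (hab : a ≠ b) : ∃ L, IsSide M X L ∧ a ∈ L ∧ b ∈ L := by
  obtain ⟨L, hL, haL, hbL, hcard⟩ := hf.1 a ha b hb hab
  exact ⟨L, ⟨hL, hcard⟩, haL, hbL⟩

lemma FreelyContains.isSide_of_mem (hf : FreelyContains M X) {a : S} (ha : a ∈ X)
    (hrank : pointRank M a + 1 ≤ X.card) (hL : L ∈ M.lines) (haL : a ∈ L) :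
    IsSide M X L := by
  set T := (M.lines.filter (a ∈ ·)).filter (IsSide M X)
  have hT : (X.erase a).card ≤ T.card := by
    refine card_le_card_of_forall_subsingleton (fun b L => b ∈ L) ?_ ?_
    · intro b hb
      obtain ⟨L, hside, haL, hbL⟩ :=
        hf.exists_isSide ha (mem_of_mem_erase hb) (ne_of_mem_erase hb).symm
      exact ⟨L, by simp [T, hside.1, haL, hside], hbL⟩
    · intro L hL b hb c hc
      simp only [T, mem_filter] at hL
      simp only [Set.mem_ofPred_eq, mem_erase] at hb hc
      have := hL.2.inter_eq (mem_inter.2 ⟨hL.1.2, ha⟩) (mem_inter.2 ⟨hb.2, hb.1.2⟩) hb.1.1.symm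
      have := mem_inter.2 ⟨hc.2, hc.1.2⟩
      grind
  have hTeq : T = M.lines.filter (a ∈ ·) := by
    refine eq_of_subset_of_card_le (filter_subset _ _) ?_
    rw [card_erase_of_mem ha] at hT
    unfold pointRank at hrank
    omega
  exact (mem_filter.1 (hTeq ▸ mem_filter.2 ⟨hL, haL⟩ : L ∈ T)).2

lemma FreelyContains.card_sides (hf : FreelyContains M X) :
    (M.sides_s5 X).card = X.card.choose 2 := by
  rw [← card_powersetCard]
  refine card_bij (fun L _ => L ∩ X) ?_ ?_ ?_
  · intro L hL
    exact mem_powersetCard.2 ⟨inter_subset_right, (PSTS.mem_sides.1 hL).2⟩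
  · intro L₁ hL₁ L₂ hL₂ heq
    exact (PSTS.mem_sides.1 hL₁).eq_of_inter_eq (PSTS.mem_sides.1 hL₂) heq
  · intro e he
    obtain ⟨heX, he2⟩ := mem_powersetCard.1 he
    obtain ⟨a, b, hab, rfl⟩ := card_eq_two.1 he2
    have ha : a ∈ X := heX (by simp)
    have hb : b ∈ X := heX (by simp)
    obtain ⟨L, hL, haL, hbL⟩ := hf.exists_isSide ha hb hab
    exact ⟨L, PSTS.mem_sides.2 hL,
      hL.inter_eq (mem_inter.2 ⟨haL, ha⟩) (mem_inter.2 ⟨hbL, hb⟩) hab⟩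

lemma FreelyContains.exists_isSide_mem [Fintype S] (hf : FreelyContains M X)
    (hS : Fintype.card S ≤ (X.card + 1).choose 2) {x : S} (hx : x ∉ X) :
    ∃ L, IsSide M X L ∧ x ∈ L := by
  set U := (M.sides_s5 X).biUnion (· \ X)
  have hdisj : (M.sides_s5 X : Set (Finset S)).PairwiseDisjoint (· \ X) := by
    intro L₁ hL₁ L₂ hL₂ hne
    refine disjoint_left.2 fun y hy₁ hy₂ => (mem_sdiff.1 hy₁).2 ?_
    exact hf.2 L₁ L₂ (PSTS.mem_sides.1 hL₁) (PSTS.mem_sides.1 hL₂) hne y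
      (mem_sdiff.1 hy₁).1 (mem_sdiff.1 hy₂).1
  have hU : U.card = X.card.choose 2 := by
    rw [card_biUnion hdisj, sum_congr rfl fun L hL => (PSTS.mem_sides.1 hL).card_sdiff,
      sum_const, smul_eq_mul, mul_one, hf.card_sides]
  have hUcompl : U = Xᶜ := by
    refine eq_of_subset_of_card_le (fun y hy => ?_) ?_
    · obtain ⟨L, -, hy⟩ := mem_biUnion.1 hy
      exact mem_compl.2 (mem_sdiff.1 hy).2
    · have : (X.card + 1).choose 2 = X.card + X.card.choose 2 := by
        rw [Nat.choose_succ_succ', Nat.choose_one_right]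
      rw [card_compl, hU]
      omega
  obtain ⟨L, hL, hxL⟩ := mem_biUnion.1 (hUcompl ▸ mem_compl.2 hx : x ∈ U)
  exact ⟨L, PSTS.mem_sides.1 hL, (mem_sdiff.1 hxL).1⟩

end

section Binomial

variable {S : Type} [Fintype S] [DecidableEq S] {M : PSTS S} {n : ℕ} {X₁ X₂ : Finset S}

lemma IsBinomial.isSide_of_mem (hM : IsBinomial M (n + 1)) {X L : Finset S}
    (hX : X.card = n) (hf : FreelyContains M X) {a : S} (ha : a ∈ X) (hL : L ∈ M.lines)
    (haL : a ∈ L) : IsSide M X L := by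
  have hpos : 0 < X.card := card_pos.2 ⟨a, ha⟩
  refine hf.isSide_of_mem ha ?_ hL haL
  rw [hM.2.2 a]
  omega

lemma IsBinomial.inter_nonempty (hM : IsBinomial M (n + 1)) (h1 : X₁.card = n)
    (h2 : X₂.card = n) (hf1 : FreelyContains M X₁) (hf2 : FreelyContains M X₂)
    (hX₂ : X₂.Nonempty) : (X₁ ∩ X₂).Nonempty := by
  obtain ⟨x, hx⟩ := hX₂
  by_cases hx₁ : x ∈ X₁
  · exact ⟨x, mem_inter.2 ⟨hx₁, hx⟩⟩
  obtain ⟨L, hL₁, hxL⟩ := hf1.exists_isSide_mem (by rw [hM.1, h1]) hx₁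
  have hL₂ : IsSide M X₂ L := hM.isSide_of_mem h2 hf2 hx hL₁.1 hxL
  obtain ⟨y, hy⟩ := inter_nonempty_of_card_lt_card_add_card (s := L) (t := L ∩ X₁)
    (u := L ∩ X₂) inter_subset_left inter_subset_left
    (by rw [M.card3 L hL₁.1, hL₁.2, hL₂.2]; omega)
  exact ⟨y, by grind⟩

lemma IsBinomial.card_inter_le_one (hM : IsBinomial M (n + 1)) (h1 : X₁.card = n)
    (h2 : X₂.card = n) (hf1 : FreelyContains M X₁) (hf2 : FreelyContains M X₂)
    (hne : X₁ ≠ X₂) : (X₁ ∩ X₂).card ≤ 1 := by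
  by_contra! hlt
  obtain ⟨a, ha, b, hb, hab⟩ := one_lt_card.1 hlt
  rw [mem_inter] at ha hb
  obtain ⟨x, hx₂, hx₁⟩ := not_subset.1 fun hsub =>
    hne (eq_of_subset_of_card_le hsub (by omega)).symm
  have hxa : x ≠ a := fun h => hx₁ (h ▸ ha.1)
  have hxb : x ≠ b := fun h => hx₁ (h ▸ hb.1)
  obtain ⟨La, hLa, hxLa, haLa⟩ := hf2.exists_isSide hx₂ ha.2 hxa
  obtain ⟨Lb, hLb, hxLb, hbLb⟩ := hf2.exists_isSide hx₂ hb.2 hxb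
  have hLab : La ≠ Lb := by
    rintro rfl
    have := hLa.inter_eq (mem_inter.2 ⟨hxLa, hx₂⟩) (mem_inter.2 ⟨haLa, ha.2⟩) hxa
    have := mem_inter.2 ⟨hbLb, hb.2⟩
    grind
  exact hx₁ (hf1.2 La Lb (hM.isSide_of_mem h1 hf1 ha.1 hLa.1 haLa)
    (hM.isSide_of_mem h1 hf1 hb.1 hLb.1 hbLb) hLab x hxLa hxLb)

end Binomial

/-- Any two distinct complete K_n-graphs freely contained in a
binomial B(n+1)-configuration share exactly one vertex. -/
theorem stmt_5 (n : ℕ) (S : Type) [Fintype S] [DecidableEq S] (M : PSTS S)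
    (hM : IsBinomial M (n + 1)) (X₁ X₂ : Finset S)
    (h1 : X₁.card = n) (h2 : X₂.card = n)
    (hf1 : FreelyContains M X₁) (hf2 : FreelyContains M X₂) (hne : X₁ ≠ X₂) :
    (X₁ ∩ X₂).card = 1 := by
  rcases n.eq_zero_or_pos with rfl | hn
  · exact absurd ((card_eq_zero.1 h1).trans (card_eq_zero.1 h2).symm) hne
  exact le_antisymm (hM.card_inter_le_one h1 h2 hf1 hf2 hne)
    (card_pos.2 (hM.inter_nonempty h1 h2 hf1 hf2 (card_pos.1 (h2 ▸ hn))))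
end

section
/- Let X_1, X_2, X_3 be the vertex sets of three pairwise distinct K_n-graphs freely contained in a binomial B(n+1)-configuration M, and for {k,i,j} = {1,2,3} let c_k be the unique common vertex of X_i and X_j. Then {c_1, c_2, c_3} is a line of M. -/
open Finset

/-
Every line through a vertex `p` of a freely contained `Kₙ` is a side: the sides through `p`
(one for each other vertex, all distinct) already exhaust the `n - 1` lines through `p`.
Hence no point lies on three of the graphs, since a line through it would carry a further
vertex of each of them. Now the side of `X₂` through `c₁` and `c₃` is also a side of `X₁` (at
`c₃`) and of `X₃` (at `c₁`); its third point therefore lies in `X₁ ∩ X₃ = {c₂}`.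
-/

namespace PSTS

variable {S : Type} [DecidableEq S] (M : PSTS S)

lemma eq_triple_of_mem {L : Finset S} (hL : L ∈ M.lines) {u v w : S}
    (hu : u ∈ L) (hv : v ∈ L) (hw : w ∈ L) (huv : u ≠ v) (huw : u ≠ w) (hvw : v ≠ w) :
    L = {u, v, w} := by
  refine (eq_of_subset_of_card_le ?_ ?_).symm
  · intro x hx
    simp only [mem_insert, mem_singleton] at hx
    rcases hx with rfl | rfl | rfl <;> assumption
  · rw [M.card3 L hL, card_eq_three.mpr ⟨u, v, w, huv, huw, hvw, rfl⟩]

end PSTS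

lemma IsBinomial.pointRank_lt {S : Type} [Fintype S] [DecidableEq S] {M : PSTS S}
    {n : ℕ} (hM : IsBinomial M (n + 1)) (hn : 0 < n) (p : S) : pointRank M p < n := by
  rw [hM.2.2 p]
  omega

namespace FreelyContains

variable {S : Type} [DecidableEq S] {M : PSTS S} {X : Finset S}

lemma card_inter_eq_two (hX : FreelyContains M X) {p : S} (hp : p ∈ X)
    (hrank : pointRank M p < X.card) {L : Finset S} (hL : L ∈ M.lines) (hpL : p ∈ L) :
    (L ∩ X).card = 2 := by
  have hside : ∀ a ∈ X.erase p, ∃ L ∈ M.lines, p ∈ L ∧ a ∈ L ∧ (L ∩ X).card = 2 :=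
    fun a ha => hX.1 p hp a (mem_of_mem_erase ha) (ne_of_mem_erase ha).symm
  choose! side hside_mem hp_side ha_side hside_card using hside
  have hinj : Set.InjOn side (X.erase p) := by
    intro a ha b hb hab
    by_contra hne
    have : 2 < (side a ∩ X).card := two_lt_card.mpr
      ⟨p, mem_inter.mpr ⟨hp_side a ha, hp⟩,
       a, mem_inter.mpr ⟨ha_side a ha, mem_of_mem_erase ha⟩,
       b, mem_inter.mpr ⟨hab ▸ ha_side b hb, mem_of_mem_erase hb⟩,
       (ne_of_mem_erase ha).symm, (ne_of_mem_erase hb).symm, hne⟩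
    rw [hside_card a ha] at this
    exact lt_irrefl 2 this
  have himage : (X.erase p).image side = M.lines.filter (p ∈ ·) := by
    refine eq_of_subset_of_card_le ?_ ?_
    · intro L hL
      obtain ⟨a, ha, rfl⟩ := mem_image.mp hL
      exact mem_filter.mpr ⟨hside_mem a ha, hp_side a ha⟩
    · rw [card_image_of_injOn hinj, card_erase_of_mem hp]
      unfold pointRank at hrank
      omega
  obtain ⟨a, ha, rfl⟩ := mem_image.mp (himage ▸ mem_filter.mpr ⟨hL, hpL⟩)
  exact hside_card a ha

lemma exists_mem_inter_ne (hX : FreelyContains M X) {p : S} (hp : p ∈ X)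
    (hrank : pointRank M p < X.card) {L : Finset S} (hL : L ∈ M.lines) (hpL : p ∈ L) :
    ∃ x ∈ L ∩ X, x ≠ p :=
  exists_mem_ne (by rw [hX.card_inter_eq_two hp hrank hL hpL]; norm_num) p

lemma notMem_of_mem_of_mem {X₁ X₂ X₃ : Finset S} (hf₁ : FreelyContains M X₁)
    (hf₂ : FreelyContains M X₂) (hf₃ : FreelyContains M X₃)
    (h₁₂ : (X₁ ∩ X₂).card ≤ 1) (h₁₃ : (X₁ ∩ X₃).card ≤ 1) (h₂₃ : (X₂ ∩ X₃).card ≤ 1)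
    (hX₁ : 1 < X₁.card) {p : S} (hp₁ : p ∈ X₁) (hp₂ : p ∈ X₂)
    (hr₂ : pointRank M p < X₂.card) (hr₃ : pointRank M p < X₃.card) : p ∉ X₃ := by
  intro hp₃
  obtain ⟨a, ha, hap⟩ := exists_mem_ne hX₁ p
  obtain ⟨L, hL, hpL, haL, -⟩ := hf₁.1 p hp₁ a ha (Ne.symm hap)
  obtain ⟨b, hb, hbp⟩ := hf₂.exists_mem_inter_ne hp₂ hr₂ hL hpL
  obtain ⟨d, hd, hdp⟩ := hf₃.exists_mem_inter_ne hp₃ hr₃ hL hpL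
  obtain ⟨hbL, hbX₂⟩ := mem_inter.mp hb
  obtain ⟨hdL, hdX₃⟩ := mem_inter.mp hd
  have hbX₁ : b ∉ X₁ := fun h =>
    hbp (card_le_one.mp h₁₂ b (mem_inter.mpr ⟨h, hbX₂⟩) p (mem_inter.mpr ⟨hp₁, hp₂⟩))
  have hdX₁ : d ∉ X₁ := fun h =>
    hdp (card_le_one.mp h₁₃ d (mem_inter.mpr ⟨h, hdX₃⟩) p (mem_inter.mpr ⟨hp₁, hp₃⟩))
  have hdX₂ : d ∉ X₂ := fun h =>
    hdp (card_le_one.mp h₂₃ d (mem_inter.mpr ⟨h, hdX₃⟩) p (mem_inter.mpr ⟨hp₂, hp₃⟩))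
  have hL_eq := M.eq_triple_of_mem hL hpL haL hbL (Ne.symm hap) (Ne.symm hbp)
    (fun h => hbX₁ (h ▸ ha))
  rw [hL_eq] at hdL
  simp only [mem_insert, mem_singleton] at hdL
  rcases hdL with rfl | rfl | rfl
  exacts [hdp rfl, hdX₁ ha, hdX₂ hbX₂]

lemma line_eq_of_inter_eq_singleton {X₁ X₃ : Finset S} (hf₁ : FreelyContains M X₁)
    (hf₃ : FreelyContains M X₃) {c : S} (h₁₃ : X₁ ∩ X₃ = {c}) {u w : S}
    (hu₃ : u ∈ X₃) (hu₁ : u ∉ X₁) (hw₁ : w ∈ X₁) (hw₃ : w ∉ X₃)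
    (hru : pointRank M u < X₃.card) (hrw : pointRank M w < X₁.card)
    {L : Finset S} (hL : L ∈ M.lines) (huL : u ∈ L) (hwL : w ∈ L) : L = {u, c, w} := by
  obtain ⟨x, hx, hxw⟩ := hf₁.exists_mem_inter_ne hw₁ hrw hL hwL
  obtain ⟨y, hy, hyu⟩ := hf₃.exists_mem_inter_ne hu₃ hru hL huL
  obtain ⟨hxL, hxX₁⟩ := mem_inter.mp hx
  obtain ⟨hyL, hyX₃⟩ := mem_inter.mp hy
  have hL_eq : L = {u, x, w} := M.eq_triple_of_mem hL huL hxL hwL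
    (fun h => hu₁ (h ▸ hxX₁)) (fun h => hu₁ (h ▸ hw₁)) hxw
  have hyx : y = x := by
    rw [hL_eq] at hyL
    simp only [mem_insert, mem_singleton] at hyL
    rcases hyL with rfl | rfl | rfl
    exacts [absurd rfl hyu, rfl, absurd hyX₃ hw₃]
  have hxc : x = c := mem_singleton.mp (h₁₃ ▸ mem_inter.mpr ⟨hxX₁, hyx ▸ hyX₃⟩)
  rwa [hxc] at hL_eq

end FreelyContains

theorem stmt_7_general (n : ℕ) (S : Type) [Fintype S] [DecidableEq S] (M : PSTS S)
    (hM : IsBinomial M (n + 1)) (X₁ X₂ X₃ : Finset S)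
    (h1 : X₁.card = n) (h2 : X₂.card = n) (h3 : X₃.card = n)
    (hf1 : FreelyContains M X₁) (hf2 : FreelyContains M X₂)
    (hf3 : FreelyContains M X₃)
    (h12 : X₁ ≠ X₂)
    (c₁ c₂ c₃ : S)
    (hc3 : X₁ ∩ X₂ = {c₃}) (hc2 : X₁ ∩ X₃ = {c₂}) (hc1 : X₂ ∩ X₃ = {c₁}) :
    ({c₁, c₂, c₃} : Finset S) ∈ M.lines := by
  obtain ⟨hc₃X₁, hc₃X₂⟩ := mem_inter.mp (hc3 ▸ mem_singleton_self c₃)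
  obtain ⟨hc₁X₂, hc₁X₃⟩ := mem_inter.mp (hc1 ▸ mem_singleton_self c₁)
  have h₁₂ : (X₁ ∩ X₂).card ≤ 1 := by rw [hc3, card_singleton]
  have h₁₃ : (X₁ ∩ X₃).card ≤ 1 := by rw [hc2, card_singleton]
  have h₂₃ : (X₂ ∩ X₃).card ≤ 1 := by rw [hc1, card_singleton]
  have hn : 1 < n := by
    by_contra! hn
    have eq_singleton : ∀ X : Finset S, X.card = n → c₃ ∈ X → X = {c₃} := fun X hX hc =>
      (eq_of_subset_of_card_le (singleton_subset_iff.mpr hc) (by simp [hX]; omega)).symm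
    exact h12 ((eq_singleton X₁ h1 hc₃X₁).trans (eq_singleton X₂ h2 hc₃X₂).symm)
  have hrank : ∀ p, pointRank M p < n := hM.pointRank_lt (by omega)
  have hc₁X₁ : c₁ ∉ X₁ := hf2.notMem_of_mem_of_mem hf3 hf1 h₂₃ (inter_comm X₁ X₂ ▸ h₁₂)
    (inter_comm X₁ X₃ ▸ h₁₃) (h2 ▸ hn) hc₁X₂ hc₁X₃ (h3 ▸ hrank c₁) (h1 ▸ hrank c₁)
  have hc₃X₃ : c₃ ∉ X₃ := hf1.notMem_of_mem_of_mem hf2 hf3 h₁₂ h₁₃ h₂₃ (h1 ▸ hn)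
    hc₃X₁ hc₃X₂ (h2 ▸ hrank c₃) (h3 ▸ hrank c₃)
  obtain ⟨L, hL, hc₁L, hc₃L, -⟩ := hf2.1 c₁ hc₁X₂ c₃ hc₃X₂ (fun h => hc₁X₁ (h ▸ hc₃X₁))
  rwa [hf1.line_eq_of_inter_eq_singleton hf3 hc2 hc₁X₃ hc₁X₁ hc₃X₁ hc₃X₃ (h3 ▸ hrank c₁)
    (h1 ▸ hrank c₃) hL hc₁L hc₃L] at hL

/-- For three pairwise distinct freely contained K_n-graphs with
pairwise common vertices c₁, c₂, c₃, the set {c₁,c₂,c₃} is a line of M. -/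
theorem stmt_7 (n : ℕ) (S : Type) [Fintype S] [DecidableEq S] (M : PSTS S)
    (hM : IsBinomial M (n + 1)) (X₁ X₂ X₃ : Finset S)
    (h1 : X₁.card = n) (h2 : X₂.card = n) (h3 : X₃.card = n)
    (hf1 : FreelyContains M X₁) (hf2 : FreelyContains M X₂)
    (hf3 : FreelyContains M X₃)
    (h12 : X₁ ≠ X₂) (h13 : X₁ ≠ X₃) (h23 : X₂ ≠ X₃)
    (c₁ c₂ c₃ : S)
    (hc3 : X₁ ∩ X₂ = {c₃}) (hc2 : X₁ ∩ X₃ = {c₂}) (hc1 : X₂ ∩ X₃ = {c₁}) :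
    ({c₁, c₂, c₃} : Finset S) ∈ M.lines :=
  stmt_7_general n S M hM X₁ X₂ X₃ h1 h2 h3 hf1 hf2 hf3 h12 c₁ c₂ c₃ hc3 hc2 hc1
end

section
/- Let G_1, …, G_m be m pairwise distinct K_n-graphs freely contained in a binomial B(n+1)-configuration M, and for each 2-subset {i,j} of I = {1,…,m} let q^{i,j} be the unique common vertex of G_i and G_j. Then the map {i,j} ↦ q^{i,j} is an embedding of the combinatorial Grassmannian G(I,2) into M: it is injective and maps each line of G(I,2) onto a line of M. -/
open Finset

/-!
Every point of `M` has rank `n - 1`, so the `n - 1` sides of a freely contained `K_n` through one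
of its vertices are all the lines through that vertex: every line through a vertex carries a second
vertex of the graph. Hence no point lies on three of the graphs, since a line through it would carry
a further vertex of each of them on its two remaining points, so two of the graphs would share a
second vertex; this gives injectivity. For distinct `i, j, k`, the side of `G_i` through `q^{i,j}`
and `q^{i,k}` carries a second vertex of `G_j` and one of `G_k`, both of which must be its third
point, so that point is `q^{j,k}`.
-/

section FreelyContained

variable {S : Type} [DecidableEq S]

lemma eq_or_eq_or_eq_of_mem_erase_of_card_eq_three {L : Finset S} (hL : L.card = 3)
    {p u v w : S} (hp : p ∈ L) (hu : u ∈ L.erase p) (hv : v ∈ L.erase p)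
    (hw : w ∈ L.erase p) : u = v ∨ u = w ∨ v = w := by
  by_contra! h
  have hsub : ({u, v, w} : Finset S) ⊆ L.erase p := by
    simp only [insert_subset_iff, singleton_subset_iff]
    exact ⟨hu, hv, hw⟩
  have := card_le_card hsub
  rw [card_erase_of_mem hp, hL, card_eq_three.2 ⟨u, v, w, h.1, h.2.1, h.2.2, rfl⟩] at this
  omega

lemma one_lt_card_of_inter_eq_singleton {A B : Finset S} {p : S} (hAB : A ≠ B)
    (hcard : A.card = B.card) (hp : A ∩ B = {p}) : 1 < A.card := by
  by_contra! h
  have hpAB := mem_inter.1 (hp ▸ mem_singleton_self p)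
  have eq_singleton : ∀ Y : Finset S, Y.card ≤ 1 → p ∈ Y → Y = {p} := fun Y hY hpY =>
    eq_singleton_iff_unique_mem.2 ⟨hpY, fun x hx => card_le_one.1 hY x hx p hpY⟩
  exact hAB ((eq_singleton A h hpAB.1).trans (eq_singleton B (hcard ▸ h) hpAB.2).symm)

variable {M : PSTS S}

lemma card_line_inter_eq_two {X L : Finset S} {a : S} (hX : FreelyContains M X) (ha : a ∈ X)
    (hrank : pointRank M a ≤ X.card - 1) (hL : L ∈ M.lines) (haL : a ∈ L) :
    (L ∩ X).card = 2 := by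
  choose! side hside_line hside_left hside_right hside_card using hX.1
  have hside_inter : ∀ b ∈ X.erase a, side a b ∩ X = {a, b} := fun b hb => by
    obtain ⟨hba, hbX⟩ := mem_erase.1 hb
    refine (eq_of_subset_of_card_le ?_ ?_).symm
    · simp only [insert_subset_iff, singleton_subset_iff, mem_inter]
      exact ⟨⟨hside_left a ha b hbX hba.symm, ha⟩, hside_right a ha b hbX hba.symm, hbX⟩
    · rw [hside_card a ha b hbX hba.symm, card_pair hba.symm]
  have hside_inj : Set.InjOn (side a) (X.erase a) := fun b hb b' hb' heq => by
    have hb'' : b ∈ ({a, b'} : Finset S) := by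
      rw [← hside_inter b' hb', ← heq, hside_inter b hb]; simp
    rcases mem_insert.1 hb'' with rfl | hbb'
    · exact absurd rfl (ne_of_mem_erase hb)
    · exact mem_singleton.1 hbb'
  -- the `X.card - 1` sides through `a` already exhaust the lines through `a`
  have hsides : (X.erase a).image (side a) = M.lines.filter (a ∈ ·) := by
    refine eq_of_subset_of_card_le ?_ ?_
    · intro L' hL'
      obtain ⟨b, hb, rfl⟩ := mem_image.1 hL'
      obtain ⟨hba, hbX⟩ := mem_erase.1 hb
      exact mem_filter.2 ⟨hside_line a ha b hbX hba.symm, hside_left a ha b hbX hba.symm⟩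
    · rw [card_image_of_injOn hside_inj, card_erase_of_mem ha]
      exact hrank
  obtain ⟨b, hb, rfl⟩ := mem_image.1 (hsides ▸ mem_filter.2 ⟨hL, haL⟩)
  rw [hside_inter b hb, card_pair (ne_of_mem_erase hb).symm]

lemma exists_ne_mem_line_of_mem {X L : Finset S} {a : S} (hX : FreelyContains M X) (ha : a ∈ X)
    (hrank : pointRank M a ≤ X.card - 1) (hL : L ∈ M.lines) (haL : a ∈ L) :
    ∃ u ∈ X, u ∈ L.erase a := by
  obtain ⟨u, hu, hua⟩ :=
    exists_mem_ne (by rw [card_line_inter_eq_two hX ha hrank hL haL]; omega) a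
  exact ⟨u, (mem_inter.1 hu).2, mem_erase.2 ⟨hua, (mem_inter.1 hu).1⟩⟩

variable {n : ℕ} {A B C : Finset S} {p : S}

lemma notMem_third_of_mem_of_mem (hA : FreelyContains M A) (hB : FreelyContains M B)
    (hC : FreelyContains M C) (hAc : A.card = n) (hBc : B.card = n) (hCc : C.card = n)
    (hn : 1 < n) (hrank : pointRank M p ≤ n - 1) (hAB : (A ∩ B).card ≤ 1)
    (hAC : (A ∩ C).card ≤ 1) (hBC : (B ∩ C).card ≤ 1) (hpA : p ∈ A) (hpB : p ∈ B) :
    p ∉ C := by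
  intro hpC
  obtain ⟨b, hbA, hbp⟩ := exists_mem_ne (hAc ▸ hn) p
  obtain ⟨L, hL, hpL, -, -⟩ := hA.1 p hpA b hbA hbp.symm
  obtain ⟨u, huA, huL⟩ := exists_ne_mem_line_of_mem hA hpA (hAc ▸ hrank) hL hpL
  obtain ⟨v, hvB, hvL⟩ := exists_ne_mem_line_of_mem hB hpB (hBc ▸ hrank) hL hpL
  obtain ⟨w, hwC, hwL⟩ := exists_ne_mem_line_of_mem hC hpC (hCc ▸ hrank) hL hpL
  have hunique : ∀ {Y Z : Finset S}, (Y ∩ Z).card ≤ 1 → p ∈ Y → p ∈ Z →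
      ∀ x ∈ Y, x ∈ Z → x = p :=
    fun hYZ hpY hpZ x hxY hxZ =>
      card_le_one.1 hYZ x (mem_inter.2 ⟨hxY, hxZ⟩) p (mem_inter.2 ⟨hpY, hpZ⟩)
  rcases eq_or_eq_or_eq_of_mem_erase_of_card_eq_three (M.card3 L hL) hpL huL hvL hwL
    with rfl | rfl | rfl
  · exact ne_of_mem_erase huL (hunique hAB hpA hpB u huA hvB)
  · exact ne_of_mem_erase huL (hunique hAC hpA hpC u huA hwC)
  · exact ne_of_mem_erase hvL (hunique hBC hpB hpC v hvB hwC)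

lemma common_vertices_mem_lines {r s : S} (hA : FreelyContains M A)
    (hB : FreelyContains M B) (hC : FreelyContains M C) (hAc : A.card = n) (hBc : B.card = n)
    (hCc : C.card = n) (hn : 1 < n) (hrank : ∀ x, pointRank M x ≤ n - 1) (hAB : A ∩ B = {p})
    (hAC : A ∩ C = {r}) (hBC : B ∩ C = {s}) : ({p, r, s} : Finset S) ∈ M.lines := by
  obtain ⟨hpA, hpB⟩ := mem_inter.1 (hAB ▸ mem_singleton_self p)
  obtain ⟨hrA, hrC⟩ := mem_inter.1 (hAC ▸ mem_singleton_self r)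
  have hcard : ∀ {Y Z : Finset S} {x : S}, Y ∩ Z = {x} → (Y ∩ Z).card ≤ 1 := fun h => by
    rw [h, card_singleton]
  have not_three : ∀ {x : S}, x ∈ A → x ∈ B → x ∉ C := fun hxA hxB =>
    notMem_third_of_mem_of_mem hA hB hC hAc hBc hCc hn (hrank _) (hcard hAB) (hcard hAC) (hcard hBC)
      hxA hxB
  have hpr : p ≠ r := fun h => not_three hpA hpB (h ▸ hrC)
  obtain ⟨L, hL, hpL, hrL, -⟩ := hA.1 p hpA r hrA hpr
  obtain ⟨t, htB, htL⟩ := exists_ne_mem_line_of_mem hB hpB (hBc ▸ hrank p) hL hpL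
  obtain ⟨t', htC, htL'⟩ := exists_ne_mem_line_of_mem hC hrC (hCc ▸ hrank r) hL hrL
  have hrt : r ≠ t := fun h => not_three hrA (h ▸ htB) hrC
  have hpt' : t' ≠ p := fun h => not_three hpA hpB (h ▸ htC)
  -- `r`, `t`, `t'` all lie in `L.erase p`, which has only two points
  have htt' : t = t' := by
    rcases eq_or_eq_or_eq_of_mem_erase_of_card_eq_three (M.card3 L hL) hpL
      (mem_erase.2 ⟨hpr.symm, hrL⟩) htL (mem_erase.2 ⟨hpt', (mem_erase.1 htL').2⟩)
      with h | h | h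
    · exact absurd h hrt
    · exact absurd h.symm (ne_of_mem_erase htL')
    · exact h
  have hts : t = s := mem_singleton.1 (hBC ▸ mem_inter.2 ⟨htB, htt' ▸ htC⟩)
  subst hts
  have hsub : ({p, r, t} : Finset S) ⊆ L := by
    simp only [insert_subset_iff, singleton_subset_iff]
    exact ⟨hpL, hrL, (mem_erase.1 htL).2⟩
  have hprt : ({p, r, t} : Finset S).card = 3 :=
    card_eq_three.2 ⟨p, r, t, hpr, (ne_of_mem_erase htL).symm, hrt, rfl⟩
  rwa [eq_of_subset_of_card_le hsub (by rw [M.card3 L hL, hprt])]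

end FreelyContained

lemma pair_eq_of_common_vertex_eq {ι S : Type} [DecidableEq ι] {X : ι → Finset S}
    {q : ι → ι → S} (hmem : ∀ i j, i ≠ j → q i j ∈ X i ∧ q i j ∈ X j)
    (not_three : ∀ i j k, i ≠ j → i ≠ k → j ≠ k →
      ∀ x, x ∈ X i → x ∈ X j → x ∉ X k)
    {i j k l : ι} (hij : i ≠ j) (hkl : k ≠ l) (hq : q i j = q k l) :
    ({i, j} : Finset ι) = {k, l} := by
  have hmem_pair : ∀ a, q k l ∈ X a → a ∈ ({i, j} : Finset ι) := fun a ha => by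
    by_contra h
    simp only [mem_insert, mem_singleton, not_or] at h
    exact not_three i j a hij (Ne.symm h.1) (Ne.symm h.2) _
      (hq ▸ (hmem i j hij).1) (hq ▸ (hmem i j hij).2) ha
  have hsub : ({k, l} : Finset ι) ⊆ {i, j} :=
    insert_subset_iff.2 ⟨hmem_pair k (hmem k l hkl).1,
      singleton_subset_iff.2 (hmem_pair l (hmem k l hkl).2)⟩
  exact (eq_of_subset_of_card_le hsub (by rw [card_pair hij, card_pair hkl])).symm

/-- The pairwise common vertices q^{i,j} of m distinct freely
contained K_n-graphs give an embedding of the Grassmannian G(I,2) into M: the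
map {i,j} ↦ q^{i,j} is injective and carries lines of G(I,2) to lines of M. -/
theorem stmt_9 (n m : ℕ) (S : Type) [Fintype S] [DecidableEq S] (M : PSTS S)
    (hM : IsBinomial M (n + 1)) (X : Fin m → Finset S)
    (hinj : Function.Injective X) (hcard : ∀ i, (X i).card = n)
    (hfree : ∀ i, FreelyContains M (X i))
    (q : Fin m → Fin m → S)
    (hq : ∀ i j, i ≠ j → X i ∩ X j = {q i j}) :
    (∀ i j k l : Fin m, i ≠ j → k ≠ l → q i j = q k l →
      ({i, j} : Finset (Fin m)) = {k, l}) ∧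
    (∀ i j k : Fin m, i ≠ j → i ≠ k → j ≠ k →
      ({q i j, q i k, q j k} : Finset S) ∈ M.lines) := by
  have hrank : ∀ x, pointRank M x ≤ n - 1 := fun x => by rw [hM.2.2 x]; omega
  have hmem : ∀ i j, i ≠ j → q i j ∈ X i ∧ q i j ∈ X j := fun i j hij =>
    mem_inter.1 (hq i j hij ▸ mem_singleton_self _)
  have hn : ∀ i j : Fin m, i ≠ j → 1 < n := fun i j hij =>
    hcard i ▸ one_lt_card_of_inter_eq_singleton (hinj.ne hij) ((hcard i).trans (hcard j).symm)
      (hq i j hij)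
  have hsub : ∀ i j, i ≠ j → (X i ∩ X j).card ≤ 1 := fun i j hij => by
    rw [hq i j hij, card_singleton]
  refine ⟨fun i j k l hij hkl hqe => pair_eq_of_common_vertex_eq hmem ?_ hij hkl hqe,
    fun i j k hij hik hjk => ?_⟩
  · intro a b c hab hac hbc x hxa hxb
    exact notMem_third_of_mem_of_mem (hfree a) (hfree b) (hfree c) (hcard a) (hcard b) (hcard c)
      (hn a b hab) (hrank x) (hsub a b hab) (hsub a c hac) (hsub b c hbc) hxa hxb
  · exact common_vertices_mem_lines (hfree i) (hfree j) (hfree k) (hcard i) (hcard j)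
      (hcard k) (hn i j hij) hrank (hq i j hij) (hq i k hik) (hq j k hjk)
end

section
/- A binomial B(n+1)-configuration freely contains at most n+1 distinct complete K_n-graphs. -/
open Finset

/-!
Through a vertex `p` of a freely contained `K_n` pass `n - 1` sides, and in a B(n+1)-configuration
`p` has rank `n - 1`, so every line through `p` is a side. Consequently two freely contained
`K_n`-graphs sharing two points coincide, and no point lies on three of them: a side through the
common point would carry a further vertex of each of the three graphs, four points in all.
Counting incidences, `m` such graphs give `m n ≤ 2 · C(n+1, 2) = (n+1) n`.
-/

section

variable {S : Type} [DecidableEq S] {M : PSTS S}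

lemma card_erase_le_card_sides {Y : Finset S} (hY : FreelyContains M Y) {p : S} (hp : p ∈ Y) :
    #(Y.erase p) ≤ #{L ∈ M.lines | p ∈ L ∧ IsSide M Y L} := by
  have hcover :
      Y.erase p ⊆ {L ∈ M.lines | p ∈ L ∧ IsSide M Y L}.biUnion fun L => (Y ∩ L).erase p := by
    intro a ha
    obtain ⟨hap, haY⟩ := mem_erase.1 ha
    obtain ⟨L, hL, hpL, haL, h2⟩ := hY.1 p hp a haY (Ne.symm hap)
    exact mem_biUnion.2
      ⟨L, mem_filter.2 ⟨hL, hpL, hL, h2⟩, mem_erase.2 ⟨hap, mem_inter.2 ⟨haY, haL⟩⟩⟩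
  refine (card_le_card hcover).trans ((card_biUnion_le_card_mul _ _ 1 ?_).trans_eq (mul_one _))
  intro L hL
  obtain ⟨-, hpL, -, h2⟩ := mem_filter.1 hL
  rw [card_erase_of_mem (mem_inter.2 ⟨hp, hpL⟩), inter_comm, h2]

lemma isSide_of_pointRank_le {Y : Finset S} (hY : FreelyContains M Y) {p : S} (hp : p ∈ Y)
    (hrank : pointRank M p ≤ #Y - 1) {L : Finset S} (hL : L ∈ M.lines) (hpL : p ∈ L) :
    IsSide M Y L := by
  have hsub : {L ∈ M.lines | p ∈ L ∧ IsSide M Y L} ⊆ {L ∈ M.lines | p ∈ L} :=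
    fun L hL => by
      simp only [mem_filter] at hL ⊢
      exact ⟨hL.1, hL.2.1⟩
  have hcard : #{L ∈ M.lines | p ∈ L} ≤ #{L ∈ M.lines | p ∈ L ∧ IsSide M Y L} := by
    have := card_erase_le_card_sides hY hp
    rw [card_erase_of_mem hp] at this
    exact hrank.trans this
  have hLside : L ∈ {L ∈ M.lines | p ∈ L ∧ IsSide M Y L} :=
    eq_of_subset_of_card_le hsub hcard ▸ mem_filter.2 ⟨hL, hpL⟩
  exact (mem_filter.1 hLside).2.2

lemma subset_of_two_mem {Y Z : Finset S} (hY : FreelyContains M Y) (hZ : FreelyContains M Z)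
    (hrank : ∀ x ∈ Z, pointRank M x ≤ #Z - 1) {p q : S} (hpq : p ≠ q)
    (hpY : p ∈ Y) (hqY : q ∈ Y) (hpZ : p ∈ Z) (hqZ : q ∈ Z) : Y ⊆ Z := by
  intro a haY
  by_cases hap : a = p
  · exact hap ▸ hpZ
  by_cases haq : a = q
  · exact haq ▸ hqZ
  obtain ⟨L₁, hL₁, hpL₁, haL₁, h₁⟩ := hY.1 p hpY a haY (Ne.symm hap)
  obtain ⟨L₂, hL₂, hqL₂, haL₂, -⟩ := hY.1 q hqY a haY (Ne.symm haq)
  have hL₁₂ : L₁ ≠ L₂ := by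
    rintro rfl
    have : 2 < #(L₁ ∩ Y) := two_lt_card.2 ⟨p, mem_inter.2 ⟨hpL₁, hpY⟩, q, mem_inter.2 ⟨hqL₂, hqY⟩,
      a, mem_inter.2 ⟨haL₁, haY⟩, hpq, Ne.symm hap, Ne.symm haq⟩
    omega
  exact hZ.2 L₁ L₂ (isSide_of_pointRank_le hZ hpZ (hrank p hpZ) hL₁ hpL₁)
    (isSide_of_pointRank_le hZ hqZ (hrank q hqZ) hL₂ hqL₂) hL₁₂ a haL₁ haL₂

lemma card_filter_mem_le_two {n : ℕ} (hn : 2 ≤ n) (hrank : ∀ x, pointRank M x ≤ n - 1)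
    {𝒳 : Finset (Finset S)} (h𝒳 : ∀ Y ∈ 𝒳, #Y = n ∧ FreelyContains M Y) (p : S) :
    #{Y ∈ 𝒳 | p ∈ Y} ≤ 2 := by
  have hsame : ∀ Y ∈ {Y ∈ 𝒳 | p ∈ Y}, ∀ Z ∈ {Y ∈ 𝒳 | p ∈ Y}, ∀ x ∈ Y, x ∈ Z → x ≠ p → Y = Z := by
    intro Y hY Z hZ x hxY hxZ hxp
    obtain ⟨⟨hcY, hfY⟩, hpY⟩ := And.imp_left (h𝒳 Y) (mem_filter.1 hY)
    obtain ⟨⟨hcZ, hfZ⟩, hpZ⟩ := And.imp_left (h𝒳 Z) (mem_filter.1 hZ)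
    refine eq_of_subset_of_card_le ?_ (by omega)
    exact subset_of_two_mem hfY hfZ (fun x _ => hcZ ▸ hrank x) hxp hxY hpY hxZ hpZ
  have hother : ∀ Y ∈ {Y ∈ 𝒳 | p ∈ Y}, ∀ L ∈ M.lines, p ∈ L → ∃ x ∈ L.erase p, x ∈ Y := by
    intro Y hY L hL hpL
    obtain ⟨⟨hcY, hfY⟩, hpY⟩ := And.imp_left (h𝒳 Y) (mem_filter.1 hY)
    have h2 := (isSide_of_pointRank_le hfY hpY (hcY ▸ hrank p) hL hpL).2
    obtain ⟨x, hx, hxp⟩ := exists_mem_ne (by omega : 1 < #(L ∩ Y)) p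
    exact ⟨x, mem_erase.2 ⟨hxp, (mem_inter.1 hx).1⟩, (mem_inter.1 hx).2⟩
  by_contra! hthree
  obtain ⟨Y, hY, Z, hZ, W, hW, hYZ, hYW, hZW⟩ := two_lt_card.1 hthree
  obtain ⟨⟨hcY, hfY⟩, hpY⟩ := And.imp_left (h𝒳 Y) (mem_filter.1 hY)
  obtain ⟨y, hyY, hyp⟩ := exists_mem_ne (hcY ▸ hn : 1 < #Y) p
  obtain ⟨L, hL, hpL, -⟩ := hfY.1 p hpY y hyY (Ne.symm hyp)
  obtain ⟨a, ha, haY⟩ := hother Y hY L hL hpL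
  obtain ⟨b, hb, hbZ⟩ := hother Z hZ L hL hpL
  obtain ⟨c, hc, hcW⟩ := hother W hW L hL hpL
  have : 2 < #(L.erase p) := two_lt_card.2 ⟨a, ha, b, hb, c, hc,
    fun h => hYZ (hsame Y hY Z hZ a haY (h ▸ hbZ) (ne_of_mem_erase ha)),
    fun h => hYW (hsame Y hY W hW a haY (h ▸ hcW) (ne_of_mem_erase ha)),
    fun h => hZW (hsame Z hZ W hW b hbZ (h ▸ hcW) (ne_of_mem_erase hb))⟩
  rw [card_erase_of_mem hpL, M.card3 L hL] at this
  omega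

end

/-- A binomial B(n+1)-configuration freely contains at most n+1
distinct complete K_n-graphs. -/
theorem stmt_10 (n m : ℕ) (S : Type) [Fintype S] [DecidableEq S] (M : PSTS S)
    (hM : IsBinomial M (n + 1)) (X : Fin m → Finset S)
    (hinj : Function.Injective X) (hcard : ∀ i, (X i).card = n)
    (hfree : ∀ i, FreelyContains M (X i)) :
    m ≤ n + 1 := by
  set 𝒳 := univ.image X
  have hm : #𝒳 = m := by rw [card_image_of_injective _ hinj, card_univ, Fintype.card_fin]
  have h𝒳 : ∀ Y ∈ 𝒳, #Y = n ∧ FreelyContains M Y := by simp [𝒳, hcard, hfree]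
  rcases lt_or_ge n 2 with hn | hn
  · -- for `n ≤ 1` the configuration has a single `n`-subset
    have h := card_le_card fun Y hY => mem_powersetCard.2 ⟨subset_univ Y, (h𝒳 Y hY).1⟩
    rw [card_powersetCard, card_univ, hM.1, hm] at h
    interval_cases n <;> simp at h <;> omega
  · have hrank : ∀ x, pointRank M x ≤ n - 1 := fun x => (hM.2.2 x).le
    have h := sum_card_le (card_filter_mem_le_two hn hrank h𝒳)
    rw [sum_congr rfl fun Y hY => (h𝒳 Y hY).1, sum_const, hm, smul_eq_mul, hM.1,
      ← Nat.add_one_mul_choose_eq, Nat.choose_one_right] at h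
    exact Nat.le_of_mul_le_mul_right h (by omega)
end

section
/- Let G_1,…,G_m (vertex sets X_1,…,X_m) be m distinct K_n-graphs freely contained in a binomial B(n+1)-configuration M = (S,L). Set Z_i = X_i ∖ ⋃_{k≠i} X_k and Z = S ∖ ⋃_i X_i. Then: |Z_i| = n - m + 1 for each i; |Z| = binomial(n+1-m, 2); every line of M contained in no side-set of any G_i lies entirely within Z; every line of M meeting Z in at least two points is disjoint from all X_i; and the number of such lines is binomial(n+1-m, 3). Consequently (Z, {L ∈ L : L ⊆ Z}) is a binomial B(n+1-m)-configuration regularly contained in M. -/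
open Finset

/-! Every line through a vertex of a freely contained `K_n` is a side: the `n - 1` sides through
it already exhaust its rank. Every point off the graph lies on exactly one side: the `C(n, 2)`
sides have pairwise distinct third points, and there are exactly `C(n, 2)` points off the graph.
Consequently two of the graphs share exactly one vertex and no three share a vertex, which gives
`|Z_i|` and, by counting incidences, `|Z|`. A point of `Z` lies on exactly one line meeting each
`X_i`, and these `m` lines are distinct, so `n - 1 - m` lines through it lie in `Z`; double
counting point-line incidences inside `Z` then yields the number of lines there. -/

section

variable {S : Type} [DecidableEq S] {M : PSTS S} {X L : Finset S} {a p : S} {n : ℕ}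

theorem PSTS.card_lines_subset_mul_three (M : PSTS S) (Z : Finset S) {r : ℕ}
    (hr : ∀ p ∈ Z, #((M.lines.filter (· ⊆ Z)).filter (p ∈ ·)) = r) :
    #(M.lines.filter (· ⊆ Z)) * 3 = #Z * r := by
  refine card_mul_eq_card_mul (fun L p => p ∈ L) (fun L hL => ?_) hr
  obtain ⟨hL, hLZ⟩ := mem_filter.mp hL
  rw [← M.card3 L hL, bipartiteAbove, filter_mem_eq_inter, inter_eq_right.mpr hLZ]

theorem Nat.choose_two_add_add (k m : ℕ) :
    (k + m).choose 2 + m.choose 2 + m = k.choose 2 + m * (k + m) := by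
  induction m with
  | zero => simp
  | succ m ih =>
    rw [← add_assoc k m 1, Nat.choose_succ_succ' (k + m) 1, Nat.choose_succ_succ' m 1,
      Nat.choose_one_right, Nat.choose_one_right]
    linarith [ih]

namespace FreelyContains

theorem isSide_of_mem_of_mem [Fintype S] (hX : FreelyContains M X) (hM : IsBinomial M (n + 1))
    (hXc : #X = n) (hL : L ∈ M.lines) (haL : a ∈ L) (ha : a ∈ X) : IsSide M X L := by
  set T := M.lines.filter (a ∈ ·)
  set sides := T.filter (fun L => #(L ∩ X) = 2)
  have hcover : X.erase a ⊆ sides.biUnion (fun L => (L ∩ X).erase a) := by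
    intro b hb
    obtain ⟨hba, hbX⟩ := mem_erase.mp hb
    obtain ⟨L', hL', haL', hbL', hc⟩ := hX.1 a ha b hbX hba.symm
    exact mem_biUnion.mpr ⟨L', by simp [sides, T, hL', haL', hc], by simp [hba, hbL', hbX]⟩
  have hle : #T ≤ #sides :=
    calc #T = #(X.erase a) := by rw [card_erase_of_mem ha, hXc]; exact hM.2.2 a
      _ ≤ _ := card_le_card hcover
      _ ≤ ∑ L ∈ sides, #((L ∩ X).erase a) := card_biUnion_le
      _ = ∑ L ∈ sides, 1 := by
          refine sum_congr rfl fun L' hL' => ?_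
          obtain ⟨hL'T, hc⟩ := mem_filter.mp hL'
          rw [card_erase_of_mem (mem_inter.mpr ⟨(mem_filter.mp hL'T).2, ha⟩), hc]
      _ = #sides := by rw [sum_const, smul_eq_mul, mul_one]
  exact ⟨hL, filter_card_eq (le_antisymm (card_filter_le _ _) hle) L (mem_filter.mpr ⟨hL, haL⟩)⟩

theorem exists_isSide_mem_s13 [Fintype S] (hX : FreelyContains M X) (hM : IsBinomial M (n + 1))
    (hXc : #X = n) (hp : p ∉ X) : ∃ L, IsSide M X L ∧ p ∈ L := by
  set sides := M.lines.filter (fun L => #(L ∩ X) = 2)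
  have hedges : n.choose 2 ≤ #sides := by
    rw [← hXc, ← card_powersetCard]
    refine (card_le_card fun e he => ?_).trans (card_image_le (f := (· ∩ X)))
    obtain ⟨heX, he2⟩ := mem_powersetCard.mp he
    obtain ⟨x, y, hxy, rfl⟩ := card_eq_two.mp he2
    obtain ⟨L, hL, hxL, hyL, hc⟩ := hX.1 x (heX (by simp)) y (heX (by simp)) hxy
    refine mem_image.mpr ⟨L, mem_filter.mpr ⟨hL, hc⟩, (eq_of_subset_of_card_le ?_ ?_).symm⟩
    · simpa [insert_subset_iff, hxL, hyL] using heX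
    · rw [hc, card_pair hxy]
  have hdisj : (sides : Set (Finset S)).PairwiseDisjoint (· \ X) := by
    intro L₁ h₁ L₂ h₂ hne
    refine disjoint_left.mpr fun q hq₁ hq₂ => (mem_sdiff.mp hq₁).2 ?_
    exact hX.2 L₁ L₂ (mem_filter.mp h₁) (mem_filter.mp h₂) hne q (mem_sdiff.mp hq₁).1
      (mem_sdiff.mp hq₂).1
  have hone : ∀ L ∈ sides, #(L \ X) = 1 := by
    intro L hL
    obtain ⟨hLm, hc⟩ := mem_filter.mp hL
    have := card_sdiff_add_card_inter L X
    rw [M.card3 L hLm, hc] at this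
    omega
  have hcover : sides.biUnion (· \ X) = univ \ X := by
    refine eq_of_subset_of_card_le (fun q hq => ?_) ?_
    · obtain ⟨L, -, hq⟩ := mem_biUnion.mp hq
      simp [(mem_sdiff.mp hq).2]
    · rw [card_biUnion hdisj, sum_congr rfl hone, card_sdiff_of_subset (subset_univ _), card_univ,
        hM.1, hXc, Nat.choose_succ_succ', Nat.choose_one_right, sum_const, smul_eq_mul, mul_one]
      simpa using hedges
  obtain ⟨L, hL, hpL⟩ := mem_biUnion.mp (hcover ▸ mem_sdiff.mpr ⟨mem_univ p, hp⟩)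
  exact ⟨L, mem_filter.mp hL, (mem_sdiff.mp hpL).1⟩

end FreelyContains

section Incidence

variable {ι : Type*} [Fintype ι] (X : ι → Finset S)

-- the paper's `Z` and `Z_i`
def uncovered [Fintype S] : Finset S := univ.filter (fun p => ∀ i, p ∉ X i)

def privatePart [DecidableEq ι] (i : ι) : Finset S :=
  (X i).filter (fun p => ∀ k, k ≠ i → p ∉ X k)

variable {X}

theorem mem_uncovered [Fintype S] : p ∈ uncovered X ↔ ∀ i, p ∉ X i := by
  simp [uncovered]

variable [DecidableEq ι]

theorem card_privatePart_add (hpair : ∀ {i j}, i ≠ j → #(X i ∩ X j) = 1)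
    (htriple : ∀ {p i j k}, i ≠ j → i ≠ k → j ≠ k → p ∈ X i → p ∈ X j → p ∉ X k) (i : ι) :
    #(privatePart X i) + (Fintype.card ι - 1) = #(X i) := by
  have hshared : (X i).filter (fun p => ¬ ∀ k, k ≠ i → p ∉ X k) =
      (univ.erase i).biUnion (fun k => X i ∩ X k) := by
    ext p
    simp only [mem_filter, mem_biUnion, mem_erase, mem_univ, mem_inter]
    grind
  have hdisj : ((univ.erase i : Finset ι) : Set ι).PairwiseDisjoint (fun k => X i ∩ X k) := by
    intro k hk l hl hkl
    simp only [coe_erase, coe_univ, Set.mem_sdiff, Set.mem_univ, Set.mem_singleton_iff,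
      true_and] at hk hl
    exact disjoint_left.mpr fun p hpk hpl =>
      htriple (Ne.symm hk) (Ne.symm hl) hkl (mem_inter.mp hpk).1 (mem_inter.mp hpk).2
        (mem_inter.mp hpl).2
  have hcard : #((univ.erase i).biUnion (fun k => X i ∩ X k)) = Fintype.card ι - 1 := by
    rw [card_biUnion hdisj, sum_congr rfl fun k hk => hpair (Ne.symm (mem_erase.mp hk).1),
      sum_const, smul_eq_mul, mul_one, card_erase_of_mem (mem_univ i), card_univ]
  rw [← hcard, ← hshared]
  exact card_filter_add_card_filter_not _

theorem sum_choose_two_card_filter_mem [Fintype S] (hpair : ∀ {i j}, i ≠ j → #(X i ∩ X j) = 1) :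
    ∑ p, (#{i | p ∈ X i}).choose 2 = (Fintype.card ι).choose 2 := by
  -- every pair `{i, j}` is counted once, at the unique point of `X i ∩ X j`
  set r : S → Finset ι → Prop := fun p e => e ⊆ univ.filter (p ∈ X ·)
  calc ∑ p, (#{i | p ∈ X i}).choose 2 = ∑ p, #((powersetCard 2 univ).bipartiteAbove r p) := by
        refine sum_congr rfl fun p _ => ?_
        rw [← card_powersetCard]
        congr 1
        ext e
        simp [r, bipartiteAbove, and_comm]
    _ = ∑ e ∈ powersetCard 2 univ, #(univ.bipartiteBelow r e) :=
        sum_card_bipartiteAbove_eq_sum_card_bipartiteBelow _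
    _ = ∑ e ∈ powersetCard 2 univ, 1 := by
        refine sum_congr rfl fun e he => ?_
        obtain ⟨i, j, hij, rfl⟩ := card_eq_two.mp (mem_powersetCard.mp he).2
        rw [← hpair hij]
        congr 1
        ext p
        simp [r, bipartiteBelow, insert_subset_iff]
    _ = (Fintype.card ι).choose 2 := by
        rw [sum_const, card_powersetCard, card_univ, smul_eq_mul, mul_one]

theorem card_uncovered_add_sum_card [Fintype S] (hpair : ∀ {i j}, i ≠ j → #(X i ∩ X j) = 1)
    (htriple : ∀ {p i j k}, i ≠ j → i ≠ k → j ≠ k → p ∈ X i → p ∈ X j → p ∉ X k) :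
    #(uncovered X) + ∑ i, #(X i) = Fintype.card S + (Fintype.card ι).choose 2 := by
  set deg : S → ℕ := fun p => #{i | p ∈ X i}
  have hdeg : ∀ p, deg p ≤ 2 := by
    intro p
    by_contra! h
    obtain ⟨i, hi, j, hj, k, hk, hij, hik, hjk⟩ := two_lt_card.mp h
    simp only [mem_filter, mem_univ, true_and] at hi hj hk
    exact htriple hij hik hjk hi hj hk
  have hsum : ∑ p, deg p = ∑ i, #(X i) :=
    calc ∑ p, deg p = ∑ p, #(univ.bipartiteAbove (fun p i => p ∈ X i) p) := rfl
      _ = ∑ i, #(univ.bipartiteBelow (fun p i => p ∈ X i) i) :=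
          sum_card_bipartiteAbove_eq_sum_card_bipartiteBelow _
      _ = ∑ i, #(X i) := by simp [bipartiteBelow]
  have hpairs := sum_choose_two_card_filter_mem hpair
  have hpoint : ∀ p, (if p ∈ uncovered X then 1 else 0) + deg p = 1 + (deg p).choose 2 := by
    intro p
    have hunc : p ∈ uncovered X ↔ deg p = 0 := by simp [uncovered, deg, filter_eq_empty_iff]
    rcases (by have := hdeg p; omega : deg p = 0 ∨ deg p = 1 ∨ deg p = 2) with h | h | h <;>
      simp [hunc, h]
  calc #(uncovered X) + ∑ i, #(X i)
      = ∑ p, ((if p ∈ uncovered X then 1 else 0) + deg p) := by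
        rw [sum_add_distrib, sum_boole, hsum, filter_mem_eq_inter, univ_inter, Nat.cast_id]
    _ = Fintype.card S + (Fintype.card ι).choose 2 := by
        rw [sum_congr rfl fun p _ => hpoint p, sum_add_distrib, hpairs, sum_const, card_univ,
          smul_eq_mul, mul_one]

end Incidence

structure IsFreeFamily {ι : Type*} (M : PSTS S) (n : ℕ) (X : ι → Finset S) : Prop where
  injective : Function.Injective X
  card_eq : ∀ i, #(X i) = n
  freelyContains : ∀ i, FreelyContains M (X i)

namespace IsFreeFamily

variable {ι : Type*} {X : ι → Finset S} {i j k : ι}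

theorem exists_mem_notMem_of_ne (hX : IsFreeFamily M n X) (hij : i ≠ j) : ∃ b ∈ X j, b ∉ X i := by
  by_contra! h
  exact hij (hX.injective (eq_of_subset_of_card_le h (by rw [hX.card_eq, hX.card_eq])).symm)

variable [Fintype S]

theorem isSide_of_mem_of_mem (hX : IsFreeFamily M n X) (hM : IsBinomial M (n + 1)) (i : ι)
    (hL : L ∈ M.lines) (haL : a ∈ L) (ha : a ∈ X i) : IsSide M (X i) L :=
  (hX.freelyContains i).isSide_of_mem_of_mem hM (hX.card_eq i) hL haL ha

theorem card_inter_eq_one (hX : IsFreeFamily M n X) (hM : IsBinomial M (n + 1)) (hij : i ≠ j) :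
    #(X i ∩ X j) = 1 := by
  obtain ⟨b, hbj, hbi⟩ := hX.exists_mem_notMem_of_ne hij
  refine le_antisymm (card_le_one.mpr fun x hx y hy => ?_) ?_
  · rw [mem_inter] at hx hy
    have hbx : b ≠ x := fun h => hbi (h ▸ hx.1)
    have hby : b ≠ y := fun h => hbi (h ▸ hy.1)
    obtain ⟨L, hL, hbL, hxL, hc⟩ := (hX.freelyContains j).1 b hbj x hx.2 hbx
    obtain ⟨L', hL', hbL', hyL', -⟩ := (hX.freelyContains j).1 b hbj y hy.2 hby
    -- `bx` and `by` are sides of `X i` meeting outside `X i`, so they coincide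
    obtain rfl : L = L' := by
      by_contra hne
      exact hbi ((hX.freelyContains i).2 L L' (hX.isSide_of_mem_of_mem hM i hL hxL hx.1)
        (hX.isSide_of_mem_of_mem hM i hL' hyL' hy.1) hne b hbL hbL')
    by_contra hxy
    have : #{b, x, y} ≤ #(L ∩ X j) := card_le_card (by simp [insert_subset_iff, *])
    rw [hc, card_insert_of_notMem (by simp [hbx, hby]), card_pair hxy] at this
    omega
  · obtain ⟨L, hside, hbL⟩ := (hX.freelyContains i).exists_isSide_mem_s13 hM (hX.card_eq i) hbi
    have hside' := hX.isSide_of_mem_of_mem hM j hside.1 hbL hbj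
    obtain ⟨x, hx⟩ := inter_nonempty_of_card_lt_card_add_card
      (inter_subset_left : L ∩ X i ⊆ L) (inter_subset_left : L ∩ X j ⊆ L) (by
        rw [hside.2, hside'.2, M.card3 L hside.1]; norm_num)
    simp only [mem_inter] at hx
    exact card_pos.mpr ⟨x, mem_inter.mpr ⟨hx.1.2, hx.2.2⟩⟩

theorem notMem_of_mem_of_mem (hX : IsFreeFamily M n X) (hM : IsBinomial M (n + 1))
    (hij : i ≠ j) (hik : i ≠ k) (hjk : j ≠ k) (hpi : p ∈ X i) (hpj : p ∈ X j) : p ∉ X k := by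
  intro hpk
  have hcommon : ∀ {i j x}, i ≠ j → x ∈ X i → x ∈ X j → p ∈ X i → p ∈ X j → x = p :=
    fun hij hxi hxj hpi hpj => card_le_one.mp (hX.card_inter_eq_one hM hij).le
      _ (mem_inter.mpr ⟨hxi, hxj⟩) _ (mem_inter.mpr ⟨hpi, hpj⟩)
  obtain ⟨q, hqk, hqi⟩ := hX.exists_mem_notMem_of_ne hik
  have hqp : q ≠ p := fun h => hqi (h ▸ hpi)
  obtain ⟨L, hL, hpL, hqL, -⟩ := (hX.freelyContains k).1 p hpk q hqk hqp.symm
  -- the line `pq` carries a second point of `X i` and of `X j` besides `p`: four points in all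
  obtain ⟨a, ha, hap⟩ :=
    exists_mem_ne (by rw [(hX.isSide_of_mem_of_mem hM i hL hpL hpi).2]; norm_num) p
  obtain ⟨b, hb, hbp⟩ :=
    exists_mem_ne (by rw [(hX.isSide_of_mem_of_mem hM j hL hpL hpj).2]; norm_num) p
  rw [mem_inter] at ha hb
  have hqa : q ≠ a := fun h => hqi (h ▸ ha.2)
  have hqb : q ≠ b := fun h => hqp (hcommon hjk.symm hqk (h ▸ hb.2) hpk hpj)
  have hab : a ≠ b := fun h => hap (hcommon hij ha.2 (h ▸ hb.2) hpi hpj)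
  have : #{q, a, b} ≤ #(L.erase p) := card_le_card (by simp [insert_subset_iff, *])
  rw [card_erase_of_mem hpL, M.card3 L hL, card_eq_three.mpr ⟨q, a, b, hqa, hqb, hab, rfl⟩] at this
  omega

theorem eq_of_inter_nonempty (hX : IsFreeFamily M n X) (hM : IsBinomial M (n + 1))
    (hL : L ∈ M.lines) (hpL : p ∈ L) (hpi : p ∉ X i) (hpj : p ∉ X j) (hi : (L ∩ X i).Nonempty)
    (hj : (L ∩ X j).Nonempty) : i = j := by
  -- a line through `p` meeting `X k` is a side of it, so its other two points lie in `X k`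
  have hsub : ∀ {k}, p ∉ X k → (L ∩ X k).Nonempty → L.erase p ⊆ X k := by
    intro k hpk ⟨a, ha⟩
    rw [mem_inter] at ha
    have : L ∩ X k = L.erase p := eq_of_subset_of_card_le
      (fun x hx => mem_erase.mpr ⟨fun h => hpk (h ▸ (mem_inter.mp hx).2), (mem_inter.mp hx).1⟩)
      (by rw [card_erase_of_mem hpL, M.card3 L hL, (hX.isSide_of_mem_of_mem hM k hL ha.1 ha.2).2])
    exact this ▸ inter_subset_right
  by_contra hij
  have := card_le_card (subset_inter (hsub hpi hi) (hsub hpj hj))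
  rw [hX.card_inter_eq_one hM hij, card_erase_of_mem hpL, M.card3 L hL] at this
  omega

theorem subset_uncovered_of_forall_not_isSide [Fintype ι] (hX : IsFreeFamily M n X)
    (hM : IsBinomial M (n + 1)) (hL : L ∈ M.lines) (hns : ∀ i, ¬ IsSide M (X i) L) :
    L ⊆ uncovered X := fun _ hq =>
  mem_uncovered.mpr fun i hqi => hns i (hX.isSide_of_mem_of_mem hM i hL hq hqi)

theorem notMem_of_two_le_card_inter_uncovered [Fintype ι] (hX : IsFreeFamily M n X)
    (hM : IsBinomial M (n + 1)) (hL : L ∈ M.lines) (h2 : 2 ≤ #(L ∩ uncovered X)) (i : ι)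
    (hpL : p ∈ L) : p ∉ X i := by
  intro hpi
  have hdisj : Disjoint (L ∩ uncovered X) (L ∩ X i) := disjoint_left.mpr fun q hq hqi =>
    mem_uncovered.mp (mem_inter.mp hq).2 i (mem_inter.mp hqi).2
  have := card_le_card (union_subset (inter_subset_left : L ∩ uncovered X ⊆ L)
    (inter_subset_left : L ∩ X i ⊆ L))
  rw [card_union_of_disjoint hdisj, (hX.isSide_of_mem_of_mem hM i hL hpL hpi).2,
    M.card3 L hL] at this
  omega

theorem card_lines_through_meeting [Fintype ι] (hX : IsFreeFamily M n X)
    (hM : IsBinomial M (n + 1)) (hpX : ∀ i, p ∉ X i) :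
    #((M.lines.filter (p ∈ ·)).filter (fun L => ∃ i, (L ∩ X i).Nonempty)) = Fintype.card ι := by
  set meets : Finset S → ι → Prop := fun L i => (L ∩ X i).Nonempty
  -- a line through `p` meeting some `X i` meets exactly one, and each `X i` is met by exactly one
  have := card_mul_eq_card_mul meets (t := univ) (m := 1) (n := 1)
    (s := (M.lines.filter (p ∈ ·)).filter (fun L => ∃ i, meets L i)) ?_ ?_
  · simpa using this
  · intro L hL
    obtain ⟨⟨hL, hpL⟩, i, hi⟩ := mem_filter.mp hL |>.imp_left mem_filter.mp
    refine le_antisymm (card_le_one.mpr fun j hj k hk => ?_) (card_pos.mpr ⟨i, by simpa⟩)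
    simp only [bipartiteAbove, mem_filter, mem_univ, true_and] at hj hk
    exact hX.eq_of_inter_nonempty hM hL hpL (hpX j) (hpX k) hj hk
  · intro i _
    obtain ⟨L, hside, hpL⟩ := (hX.freelyContains i).exists_isSide_mem_s13 hM (hX.card_eq i) (hpX i)
    refine le_antisymm (card_le_one.mpr fun L₁ h₁ L₂ h₂ => ?_) (card_pos.mpr ⟨L, ?_⟩)
    · simp only [bipartiteBelow, meets, mem_filter] at h₁ h₂
      obtain ⟨⟨⟨hL₁, hpL₁⟩, -⟩, a₁, ha₁⟩ := h₁
      obtain ⟨⟨⟨hL₂, hpL₂⟩, -⟩, a₂, ha₂⟩ := h₂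
      rw [mem_inter] at ha₁ ha₂
      by_contra hne
      exact hpX i ((hX.freelyContains i).2 L₁ L₂
        (hX.isSide_of_mem_of_mem hM i hL₁ ha₁.1 ha₁.2)
        (hX.isSide_of_mem_of_mem hM i hL₂ ha₂.1 ha₂.2) hne p hpL₁ hpL₂)
    · have hne : (L ∩ X i).Nonempty := card_pos.mp (by rw [hside.2]; norm_num)
      simp only [bipartiteBelow, meets, mem_filter]
      exact ⟨⟨⟨hside.1, hpL⟩, i, hne⟩, hne⟩

theorem card_lines_through_subset_uncovered_add [Fintype ι] (hX : IsFreeFamily M n X)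
    (hM : IsBinomial M (n + 1)) (hp : p ∈ uncovered X) :
    #((M.lines.filter (· ⊆ uncovered X)).filter (p ∈ ·)) + Fintype.card ι = n - 1 := by
  have hsplit : (M.lines.filter (· ⊆ uncovered X)).filter (p ∈ ·) =
      (M.lines.filter (p ∈ ·)).filter (fun L => ¬ ∃ i, (L ∩ X i).Nonempty) := by
    ext L
    simp only [mem_filter, subset_iff, mem_uncovered, not_exists, not_nonempty_iff_eq_empty,
      eq_empty_iff_forall_notMem, mem_inter]
    grind
  have hrank : #(M.lines.filter (p ∈ ·)) = n - 1 := hM.2.2 p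
  rw [hsplit, ← hX.card_lines_through_meeting hM (mem_uncovered.mp hp), ← hrank, add_comm]
  exact card_filter_add_card_filter_not _

variable [Fintype ι] [DecidableEq ι]

theorem card_privatePart_add (hX : IsFreeFamily M n X) (hM : IsBinomial M (n + 1)) (i : ι) :
    #(privatePart X i) + (Fintype.card ι - 1) = n :=
  hX.card_eq i ▸
    _root_.card_privatePart_add (hX.card_inter_eq_one hM) (hX.notMem_of_mem_of_mem hM) i

theorem card_le (hX : IsFreeFamily M n X) (hM : IsBinomial M (n + 1)) :
    Fintype.card ι ≤ n + 1 := by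
  rcases isEmpty_or_nonempty ι with _ | ⟨⟨i⟩⟩
  · simp
  · have := hX.card_privatePart_add hM i
    have := Fintype.card_pos_iff.mpr ⟨i⟩
    omega

theorem card_uncovered (hX : IsFreeFamily M n X) (hM : IsBinomial M (n + 1)) :
    #(uncovered X) = (n + 1 - Fintype.card ι).choose 2 := by
  have hcount := card_uncovered_add_sum_card (hX.card_inter_eq_one hM) (hX.notMem_of_mem_of_mem hM)
  have hchoose := Nat.choose_two_add_add (n + 1 - Fintype.card ι) (Fintype.card ι)
  simp only [hX.card_eq, sum_const, card_univ, smul_eq_mul, hM.1] at hcount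
  rw [Nat.sub_add_cancel (hX.card_le hM)] at hchoose
  linarith

theorem card_lines_subset_uncovered (hX : IsFreeFamily M n X) (hM : IsBinomial M (n + 1)) :
    #(M.lines.filter (· ⊆ uncovered X)) = (n + 1 - Fintype.card ι).choose 3 := by
  have := M.card_lines_subset_mul_three (uncovered X) (r := n + 1 - Fintype.card ι - 2)
    fun p hp => by have := hX.card_lines_through_subset_uncovered_add hM hp; omega
  rw [hX.card_uncovered hM, ← Nat.choose_succ_right_eq] at this
  exact Nat.eq_of_mul_eq_mul_right (by norm_num) this

end IsFreeFamily

end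

/-- structure of m distinct freely contained K_n-graphs in a
binomial B(n+1)-configuration: the private vertex sets Z_i have n+1-m points,
the set Z of points on no graph has C(n+1-m,2) points, lines that are sides of
no G_i lie in Z, lines meeting Z twice avoid all the X_i, there are C(n+1-m,3)
lines inside Z, and (Z, lines within Z) is a regularly contained
B(n+1-m)-configuration. -/
theorem stmt_13 (n m : ℕ) (S : Type) [Fintype S] [DecidableEq S] (M : PSTS S)
    (hM : IsBinomial M (n + 1)) (X : Fin m → Finset S)
    (hinj : Function.Injective X) (hcard : ∀ i, (X i).card = n)
    (hfree : ∀ i, FreelyContains M (X i))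
    (Zi : Fin m → Finset S)
    (hZi : ∀ i, Zi i = (X i).filter (fun p => ∀ k, k ≠ i → p ∉ X k))
    (Z : Finset S) (hZ : Z = Finset.univ.filter (fun p => ∀ i, p ∉ X i)) :
    (∀ i, (Zi i).card = n + 1 - m) ∧
    Z.card = Nat.choose (n + 1 - m) 2 ∧
    (∀ L ∈ M.lines, (∀ i, ¬ IsSide M (X i) L) → L ⊆ Z) ∧
    (∀ L ∈ M.lines, 2 ≤ (L ∩ Z).card → ∀ i, ∀ p ∈ L, p ∉ X i) ∧
    (M.lines.filter (fun L => L ⊆ Z)).card = Nat.choose (n + 1 - m) 3 ∧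
    RegularBinomialSub M Z (M.lines.filter (fun L => L ⊆ Z)) (n + 1 - m) := by
  -- the statement decides `∀ i : Fin m` by `Nat.decidableForallFin`, hence `congr`
  obtain rfl : Zi = privatePart X := funext fun i => by rw [hZi, privatePart]; congr
  obtain rfl : Z = uncovered X := by rw [hZ, uncovered]; congr
  have hX : IsFreeFamily M n X := ⟨hinj, hcard, hfree⟩
  have hZcard := hX.card_uncovered hM
  have hG := hX.card_lines_subset_uncovered hM
  rw [Fintype.card_fin] at hZcard hG
  have hdisj : ∀ L ∈ M.lines, 2 ≤ #(L ∩ uncovered X) → ∀ i, ∀ p ∈ L, p ∉ X i :=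
    fun _ hL h2 i _ => hX.notMem_of_two_le_card_inter_uncovered hM hL h2 i
  refine ⟨fun i => ?_, hZcard, fun L hL => hX.subset_uncovered_of_forall_not_isSide hM hL, hdisj,
    hG, filter_subset _ _, fun L hL => (mem_filter.mp hL).2, fun L hL h2 => ?_, hZcard, hG,
    fun p hp => ?_⟩
  · have := hX.card_privatePart_add hM i
    rw [Fintype.card_fin] at this
    have := i.pos
    omega
  · exact mem_filter.mpr ⟨hL, fun p hp => mem_uncovered.mpr (hdisj L hL h2 · p hp)⟩
  · have := hX.card_lines_through_subset_uncovered_add hM hp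
    rw [Fintype.card_fin] at this
    omega
end
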